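/- arXiv:math/9906131 — 9 statements merged into one kernel-verified Lean document; each statement's English description precedes it below -/
import Mathlib

section
/- Let n be a natural number and r₁,…,rₙ ∈ ℚ, and let P(t) = ∏_{i=1}^n (1 + rᵢ·t + (rᵢ²/2)·t²) ∈ ℚ[t]. Then 5! times the coefficient of t⁵ in P equals 30·(e₂·e₃ − e₁·e₄ − e₅), where e_j denotes the j-th elementary symmetric polynomial of r₁,…,rₙ (with e_j = 0 for j > n). -/
/-!
Induct on the number of factors. Multiplying by `1 + a t + (a²/2) t²` sends `[tᵏ]` to
`[tᵏ] + a [tᵏ⁻¹] + (a²/2) [tᵏ⁻²]`, while adjoining `a` sends `eₖ` to `eₖ + a eₖ₋₁`; so closed forms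
for the coefficients of `t⁰, …, t⁵` in terms of `e₁, …, e₅` propagate, each step being a polynomial
identity.
-/

open Polynomial Finset

noncomputable def esymmQ (n : ℕ) (r : Fin n → ℚ) (j : ℕ) : ℚ :=
  ∑ s ∈ Finset.univ.powersetCard j, ∏ i ∈ s, r i

namespace Multiset

variable {R : Type*} [CommSemiring R]

theorem esymm_zero_right (s : Multiset R) : s.esymm 0 = 1 := by
  simp [esymm]

theorem esymm_cons_succ (a : R) (s : Multiset R) (k : ℕ) :
    (a ::ₘ s).esymm (k + 1) = s.esymm (k + 1) + a * s.esymm k := by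
  simp only [esymm, powersetCard_cons, map_add, sum_add, map_map, Function.comp_def,
    prod_cons, sum_map_mul_left]

end Multiset

namespace Polynomial

variable {R : Type*} [CommSemiring R]

theorem coeff_one_add_C_mul_X_add_C_mul_X_sq_mul_zero (a b : R) (B : R[X]) :
    ((1 + C a * X + C b * X ^ 2) * B).coeff 0 = B.coeff 0 := by
  simp [mul_coeff_zero]

theorem coeff_one_add_C_mul_X_add_C_mul_X_sq_mul_succ (a b : R) (B : R[X]) (k : ℕ) :
    ((1 + C a * X + C b * X ^ 2) * B).coeff (k + 1) =
      B.coeff (k + 1) + a * B.coeff k + b * (X * B).coeff k := by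
  have : (1 + C a * X + C b * X ^ 2) * B = B + C a * (X * B) + C b * (X * (X * B)) := by ring
  simp [this, coeff_X_mul]

end Polynomial

open Multiset in
theorem coeff_prod_expTruncTwo {K : Type*} [Field K] [CharZero K] (s : Multiset K) :
    let P := (s.map fun x => 1 + C x * X + C (x ^ 2 / 2) * X ^ 2).prod
    P.coeff 0 = 1 ∧ P.coeff 1 = s.esymm 1 ∧ P.coeff 2 = s.esymm 1 ^ 2 / 2 ∧
    P.coeff 3 = (s.esymm 1 * s.esymm 2 - s.esymm 3) / 2 ∧
    P.coeff 4 = (s.esymm 2 ^ 2 - 2 * s.esymm 4) / 4 ∧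
    P.coeff 5 = (s.esymm 2 * s.esymm 3 - s.esymm 1 * s.esymm 4 - s.esymm 5) / 4 := by
  induction s using Multiset.induction_on with
  | empty => simp [coeff_one, esymm, powersetCard_zero_right]
  | cons a s ih =>
    dsimp only at ih ⊢
    obtain ⟨h0, h1, h2, h3, h4, h5⟩ := ih
    simp only [Multiset.map_cons, Multiset.prod_cons,
      coeff_one_add_C_mul_X_add_C_mul_X_sq_mul_zero, coeff_one_add_C_mul_X_add_C_mul_X_sq_mul_succ,
      coeff_X_mul, coeff_X_mul_zero, esymm_cons_succ, esymm_zero_right, zero_add, true_and,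
      h0, h1, h2, h3, h4, h5]
    refine ⟨?_, ?_, ?_, ?_, ?_⟩ <;> ring

theorem star_predegree (n : ℕ) (r : Fin n → ℚ)
    (P : Polynomial ℚ)
    (hP : P = ∏ i : Fin n, (1 + C (r i) * X + C ((r i) ^ 2 / 2) * X ^ 2)) :
    (5 : ℕ).factorial * P.coeff 5 =
      30 * (esymmQ n r 2 * esymmQ n r 3 - esymmQ n r 1 * esymmQ n r 4 - esymmQ n r 5) := by
  have hP' : P = ((univ.val.map r).map fun x => 1 + C x * X + C (x ^ 2 / 2) * X ^ 2).prod := by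
    rw [hP, Multiset.map_map]
    rfl
  have hesymm (j : ℕ) : esymmQ n r j = (univ.val.map r).esymm j :=
    (Finset.esymm_map_val r univ j).symm
  obtain ⟨-, -, -, -, -, h5⟩ := coeff_prod_expTruncTwo (univ.val.map r)
  simp only [hP', h5, hesymm, Nat.factorial]
  norm_num
  ring
end

section
/- Let n be a natural number, r, r₁,…,rₙ ∈ ℚ, let P(t) = ∏_{i=1}^n (1 + rᵢ·t + (rᵢ²/2)·t²) ∈ ℚ[t], and let {P}₅ denote the truncation of P to its terms of degree ≤ 5. Then 7! times the coefficient of t⁷ in (1 + r·t + (r²/2)·t²)·{P}₅ equals 630·r²·(e₂·e₃ − e₁·e₄ − e₅), where e_j denotes the j-th elementary symmetric polynomial of r₁,…,rₙ (with e_j = 0 for j > n). -/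
/-!
Over `ℂ` each factor splits as `1 + x + x²/2 = (1 + u x)(1 + v x)` with `u = (1 + i)/2`,
`v = (1 - i)/2`, so `P(t) = E(u t) E(v t)` for `E(t) = ∏ (1 + rᵢ t) = ∑ eⱼ tʲ`, and
`[t⁵]P = ∑_{a+b=5} uᵃ vᵇ e_a e_b`. Since `u + v = 1` and `u v = 1/2`, the symmetric sums
`uᵃvᵇ + uᵇvᵃ` are rational, which gives `4 [t⁵]P = e₂e₃ - e₁e₄ - e₅`. On the other side, the
truncation kills the degree 6 and 7 terms, so `[t⁷]` of the product is `(r²/2) [t⁵]P`.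
-/

open Polynomial Finset

/-- Truncation of a polynomial to its terms of degree at most `m`. -/
noncomputable def truncPoly (P : Polynomial ℚ) (m : ℕ) : Polynomial ℚ :=
  ∑ k ∈ Finset.range (m + 1), C (P.coeff k) * X ^ k

section
variable {R ι : Type*} [CommSemiring R]

theorem coeff_prod_one_add_C_mul_X (s : Finset ι) (r : ι → R) (k : ℕ) :
    (∏ i ∈ s, (1 + C (r i) * X)).coeff k = ∑ t ∈ s.powersetCard k, ∏ i ∈ t, r i := by
  classical
  simp only [prod_one_add, prod_mul_distrib, prod_const, ← map_prod, finsetSum_coeff,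
    coeff_C_mul_X_pow, powersetCard_eq_filter, sum_filter, eq_comm]

theorem coeff_prod_one_add_C_mul_mul_X (s : Finset ι) (r : ι → R) (u : R) (k : ℕ) :
    (∏ i ∈ s, (1 + C (r i * u) * X)).coeff k = u ^ k * ∑ t ∈ s.powersetCard k, ∏ i ∈ t, r i := by
  rw [coeff_prod_one_add_C_mul_X, mul_sum]
  refine sum_congr rfl fun t ht => ?_
  rw [← prod_mul_pow_card, (mem_powersetCard.mp ht).2, mul_comm]

theorem coeff_prod_quadratic_eq_sum_antidiagonal (s : Finset ι) (r : ι → R) (u v : R) (k : ℕ) :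
    (∏ i ∈ s, (1 + C (r i * (u + v)) * X + C (r i ^ 2 * (u * v)) * X ^ 2)).coeff k =
      ∑ p ∈ antidiagonal k, u ^ p.1 * v ^ p.2 *
        ((∑ t ∈ s.powersetCard p.1, ∏ i ∈ t, r i) * ∑ t ∈ s.powersetCard p.2, ∏ i ∈ t, r i) := by
  have hfactor : ∀ i, 1 + C (r i * (u + v)) * X + C (r i ^ 2 * (u * v)) * X ^ 2 =
      (1 + C (r i * u) * X) * (1 + C (r i * v) * X) := fun i => by
    simp only [map_mul, map_add, map_pow]; ring
  simp only [hfactor, prod_mul_distrib, coeff_mul, coeff_prod_one_add_C_mul_mul_X]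
  exact sum_congr rfl fun p _ => by ring

theorem coeff_one_add_C_mul_X_add_C_mul_X_sq_mul (a b : R) (Q : R[X]) (k : ℕ) :
    ((1 + C a * X + C b * X ^ 2) * Q).coeff (k + 2) =
      Q.coeff (k + 2) + a * Q.coeff (k + 1) + b * Q.coeff k := by
  simp only [add_mul, one_mul, mul_assoc, coeff_add, coeff_C_mul, coeff_X_pow_mul,
    coeff_X_mul]

end

theorem four_mul_sum_antidiagonal_five {R : Type*} [CommRing R] {u v : R} (hs : u + v = 1)
    (hp : 2 * (u * v) = 1) (e : ℕ → R) (he : e 0 = 1) :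
    4 * ∑ p ∈ antidiagonal 5, u ^ p.1 * v ^ p.2 * (e p.1 * e p.2) =
      e 2 * e 3 - e 1 * e 4 - e 5 := by
  have h5 : 4 * (u ^ 5 + v ^ 5) = -1 := by
    have : 4 * (u ^ 5 + v ^ 5) = 4 * (u + v) ^ 5 - 10 * (u + v) ^ 3 * (2 * (u * v))
        + 5 * (u + v) * (2 * (u * v)) ^ 2 := by ring
    rw [this, hs, hp]; norm_num
  have h41 : 4 * (u * v ^ 4 + u ^ 4 * v) = -1 := by
    have : 4 * (u * v ^ 4 + u ^ 4 * v) = 2 * (2 * (u * v)) * (u + v) ^ 3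
        - 3 * (2 * (u * v)) ^ 2 * (u + v) := by ring
    rw [this, hs, hp]; norm_num
  have h32 : 4 * (u ^ 2 * v ^ 3 + u ^ 3 * v ^ 2) = 1 := by
    have : 4 * (u ^ 2 * v ^ 3 + u ^ 3 * v ^ 2) = (2 * (u * v)) ^ 2 * (u + v) := by ring
    rw [this, hs, hp]; norm_num
  simp only [Nat.sum_antidiagonal_eq_sum_range_succ_mk, sum_range_succ, sum_range_zero,
    Nat.reduceSub, he]
  linear_combination e 5 * h5 + e 1 * e 4 * h41 + e 2 * e 3 * h32

theorem four_mul_coeff_five_prod_quadratic {ι : Type*} (s : Finset ι) (r : ι → ℚ) :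
    4 * (∏ i ∈ s, (1 + C (r i) * X + C (r i ^ 2 / 2) * X ^ 2)).coeff 5 =
      (∑ t ∈ s.powersetCard 2, ∏ i ∈ t, r i) * (∑ t ∈ s.powersetCard 3, ∏ i ∈ t, r i)
        - (∑ t ∈ s.powersetCard 1, ∏ i ∈ t, r i) * (∑ t ∈ s.powersetCard 4, ∏ i ∈ t, r i)
        - ∑ t ∈ s.powersetCard 5, ∏ i ∈ t, r i := by
  set u : ℂ := (1 + Complex.I) / 2
  set v : ℂ := (1 - Complex.I) / 2
  have hs : u + v = 1 := by ring
  have hp : 2 * (u * v) = 1 := by linear_combination (-1 / 2 : ℂ) * Complex.I_sq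
  have hfactor : ∀ i, (1 + C (r i) * X + C (r i ^ 2 / 2) * X ^ 2).map (Rat.castHom ℂ) =
      1 + C (r i * (u + v)) * X + C ((r i : ℂ) ^ 2 * (u * v)) * X ^ 2 := fun i => by
    rw [hs, show u * v = 1 / 2 by linear_combination hp / 2]
    simp [div_eq_mul_inv]
  apply Rat.cast_injective (α := ℂ)
  push_cast
  rw [← Rat.coe_castHom, ← coeff_map, Polynomial.map_prod]
  simp only [hfactor, coeff_prod_quadratic_eq_sum_antidiagonal]
  exact four_mul_sum_antidiagonal_five hs hp
    (fun k => ∑ t ∈ s.powersetCard k, ∏ i ∈ t, (r i : ℂ)) (by simp)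

theorem truncPoly_coeff (P : ℚ[X]) (m k : ℕ) :
    (truncPoly P m).coeff k = if k ≤ m then P.coeff k else 0 := by
  simp [truncPoly, finsetSum_coeff]

theorem fan_predegree (n : ℕ) (r : ℚ) (rr : Fin n → ℚ)
    (P : Polynomial ℚ)
    (hP : P = ∏ i : Fin n, (1 + C (rr i) * X + C ((rr i) ^ 2 / 2) * X ^ 2)) :
    (7 : ℕ).factorial *
        (((1 + C r * X + C (r ^ 2 / 2) * X ^ 2) * truncPoly P 5).coeff 7) =
      630 * r ^ 2 *
        (esymmQ n rr 2 * esymmQ n rr 3 - esymmQ n rr 1 * esymmQ n rr 4 - esymmQ n rr 5) := by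
  have h7 : ((1 + C r * X + C (r ^ 2 / 2) * X ^ 2) * truncPoly P 5).coeff 7 =
      r ^ 2 / 2 * P.coeff 5 := by
    rw [coeff_one_add_C_mul_X_add_C_mul_X_sq_mul, truncPoly_coeff, truncPoly_coeff,
      truncPoly_coeff]
    norm_num
  rw [h7, hP, Nat.factorial]
  unfold esymmQ
  linear_combination (630 * r ^ 2) * four_mul_coeff_five_prod_quadratic univ rr
end

section
/- Let n be a natural number and r₁,…,rₙ ∈ ℚ, and let P(t) = ∏_{i=1}^n (1 + rᵢ·t + (rᵢ²/2)·t²) ∈ ℚ[t]. Then 8! times the coefficient of t⁸ in P equals 2520·(e₄² − 2·e₂·e₆ + 2·e₈), where e_j denotes the j-th elementary symmetric polynomial of r₁,…,rₙ (with e_j = 0 for j > n). -/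
open Polynomial Finset

lemma coeff_prod_one_add {R : Type*} [CommRing R] {ι : Type*} [DecidableEq ι]
    (s : Finset ι) (c : ι → R) :
    ∀ k, (∏ i ∈ s, (1 + C (c i) * X)).coeff k = ∑ t ∈ s.powersetCard k, ∏ i ∈ t, c i := by
  induction s using Finset.induction_on with
  | empty =>
    intro k
    cases k with
    | zero => simp
    | succ k =>
      rw [Finset.powersetCard_eq_empty.mpr (by simp), Finset.sum_empty]
      simp [Polynomial.coeff_one]
  | @insert x s hx ih =>
    intro k
    rw [Finset.prod_insert hx]
    cases k with
    | zero =>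
      rw [Polynomial.mul_coeff_zero]
      simp [ih 0]
    | succ k =>
      have expand : (1 + C (c x) * X) * ∏ i ∈ s, (1 + C (c i) * X)
          = (∏ i ∈ s, (1 + C (c i) * X)) + C (c x) * (X * ∏ i ∈ s, (1 + C (c i) * X)) := by
        ring
      have hdisj : Disjoint (s.powersetCard (k+1)) ((s.powersetCard k).image (insert x)) := by
        rw [Finset.disjoint_right]
        intro t ht ht'
        obtain ⟨u, hu, rfl⟩ := Finset.mem_image.mp ht
        have : insert x u ⊆ s := (Finset.mem_powersetCard.mp ht').1
        exact hx (this (Finset.mem_insert_self x u))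
      rw [expand, Polynomial.coeff_add, Polynomial.coeff_C_mul, Polynomial.coeff_X_mul,
        ih, ih, Finset.powersetCard_succ_insert hx, Finset.sum_union hdisj, Finset.sum_image]
      · congr 1
        rw [Finset.mul_sum]
        apply Finset.sum_congr rfl
        intro t ht
        have hxt : x ∉ t := fun h => hx ((Finset.mem_powersetCard.mp ht).1 h)
        rw [Finset.prod_insert hxt]
      · intro t1 h1 t2 h2 he
        have hx1 : x ∉ t1 := fun h => hx ((Finset.mem_powersetCard.mp h1).1 h)
        have hx2 : x ∉ t2 := fun h => hx ((Finset.mem_powersetCard.mp h2).1 h)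
        rw [← Finset.erase_insert hx1, ← Finset.erase_insert hx2, he]

theorem transversal_configuration_predegree (n : ℕ) (r : Fin n → ℚ)
    (P : Polynomial ℚ)
    (hP : P = ∏ i : Fin n, (1 + C (r i) * X + C ((r i) ^ 2 / 2) * X ^ 2)) :
    (8 : ℕ).factorial * P.coeff 8 =
      2520 * (esymmQ n r 4 ^ 2 - 2 * esymmQ n r 2 * esymmQ n r 6 + 2 * esymmQ n r 8) := by
  classical
  obtain ⟨a, ha⟩ : ∃ a : ℂ, a = (1 + Complex.I)/2 := ⟨_, rfl⟩
  obtain ⟨b, hb⟩ : ∃ b : ℂ, b = (1 - Complex.I)/2 := ⟨_, rfl⟩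
  have hab : a * b = 1/2 := by
    rw [ha, hb]; linear_combination (-(1:ℂ)/4) * Complex.I_sq
  have ha2 : a^2 = Complex.I/2 := by
    rw [ha]; linear_combination ((1:ℂ)/4) * Complex.I_sq
  have hb2 : b^2 = -(Complex.I/2) := by
    rw [hb]; linear_combination ((1:ℂ)/4) * Complex.I_sq
  -- per-factor factorization over ℂ
  have hfac : ∀ x : ℂ, (1 + C x * X + C (x^2/2) * X^2 : ℂ[X])
      = (1 + C (a*x) * X) * (1 + C (b*x) * X) := by
    intro x
    have h1 : (C (a*x) + C (b*x) : ℂ[X]) = C x := by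
      rw [← C_add]; congr 1
      rw [show a*x + b*x = (a+b)*x by ring, show a + b = 1 by rw [ha, hb]; ring, one_mul]
    have h2 : (C (a*x) * C (b*x) : ℂ[X]) = C (x^2/2) := by
      rw [← C_mul]; congr 1
      rw [show a*x*(b*x) = (a*b)*x^2 by ring, hab]; ring
    rw [show (1 + C (a*x) * X) * (1 + C (b*x) * X)
        = 1 + (C (a*x) + C (b*x)) * X + (C (a*x) * C (b*x)) * X^2 from by ring, h1, h2]
  set f := algebraMap ℚ ℂ with hf
  have hQ : P.map f = (∏ i : Fin n, (1 + C (a * (r i : ℂ)) * X))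
      * (∏ i : Fin n, (1 + C (b * (r i : ℂ)) * X)) := by
    rw [hP, Polynomial.map_prod, ← Finset.prod_mul_distrib]
    apply Finset.prod_congr rfl
    intro i _
    rw [← hfac]
    simp only [Polynomial.map_add, Polynomial.map_mul, Polynomial.map_pow, Polynomial.map_one,
      Polynomial.map_C, Polynomial.map_X]
    simp only [Polynomial.map_ofNat, eq_ratCast]
    push_cast
    ring
  set E : ℕ → ℂ := fun j => ∑ t ∈ (Finset.univ : Finset (Fin n)).powersetCard j,
      ∏ i ∈ t, (r i : ℂ) with hEdef
  have hE : ∀ j, f (esymmQ n r j) = E j := by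
    intro j
    rw [hEdef]
    simp only [esymmQ, map_sum, map_prod]
    norm_num [hf]
  have hA : ∀ (c : ℂ) (j : ℕ),
      (∏ i : Fin n, (1 + C (c * (r i : ℂ)) * X)).coeff j = c^j * E j := by
    intro c j
    rw [coeff_prod_one_add, hEdef, Finset.mul_sum]
    apply Finset.sum_congr rfl
    intro t ht
    rw [Finset.prod_mul_distrib, Finset.prod_const, (Finset.mem_powersetCard.mp ht).2]
  have hE0 : E 0 = 1 := by simp [hEdef]
  -- the coefficient computation
  have hcoeff : f (P.coeff 8) = ∑ k ∈ Finset.range 9, (a^k * E k) * (b^(8-k) * E (8-k)) := by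
    rw [← Polynomial.coeff_map, hQ, Polynomial.coeff_mul,
      Finset.Nat.sum_antidiagonal_eq_sum_range_succ_mk]
    apply Finset.sum_congr rfl
    intro k _
    rw [hA, hA]
  -- power values
  have hv0 : b^8 = 1/16 := by
    rw [show b^8 = (b^2)^4 from by ring, hb2]
    linear_combination ((Complex.I^2 - 1)/16) * Complex.I_sq
  have hv1 : a * b^7 = Complex.I/16 := by
    rw [show a * b^7 = (a*b) * (b^2)^3 from by ring, hab, hb2]
    linear_combination (-(Complex.I)/16) * Complex.I_sq
  have hv2 : a^2 * b^6 = -(1/16) := by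
    rw [show a^2 * b^6 = a^2 * (b^2)^3 from by ring, ha2, hb2]
    linear_combination ((1 - Complex.I^2)/16) * Complex.I_sq
  have hv3 : a^3 * b^5 = -(Complex.I/16) := by
    rw [show a^3 * b^5 = (a*b)^3 * b^2 from by ring, hab, hb2]; ring
  have hv4 : a^4 * b^4 = 1/16 := by
    rw [show a^4 * b^4 = (a*b)^4 from by ring, hab]; norm_num
  have hv5 : a^5 * b^3 = Complex.I/16 := by
    rw [show a^5 * b^3 = (a*b)^3 * a^2 from by ring, hab, ha2]; ring
  have hv6 : a^6 * b^2 = -(1/16) := by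
    rw [show a^6 * b^2 = (a^2)^3 * b^2 from by ring, ha2, hb2]
    linear_combination ((1 - Complex.I^2)/16) * Complex.I_sq
  have hv7 : a^7 * b = -(Complex.I/16) := by
    rw [show a^7 * b = (a^2)^3 * (a*b) from by ring, ha2, hab]
    linear_combination (Complex.I/16) * Complex.I_sq
  have hv8 : a^8 = 1/16 := by
    rw [show a^8 = (a^2)^4 from by ring, ha2]
    linear_combination ((Complex.I^2 - 1)/16) * Complex.I_sq
  apply (algebraMap ℚ ℂ).injective
  rw [← hf]
  simp only [map_mul, map_add, map_sub, map_pow, map_natCast, map_ofNat, hE, hcoeff]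
  simp only [Finset.sum_range_succ, Finset.sum_range_zero]
  norm_num [Nat.factorial]
  linear_combination ((40320:ℂ) * E 0 * E 8) * hv0
    + ((40320:ℂ) * E 1 * E 7) * hv1
    + ((40320:ℂ) * E 2 * E 6) * hv2
    + ((40320:ℂ) * E 3 * E 5) * hv3
    + ((40320:ℂ) * E 4 * E 4) * hv4
    + ((40320:ℂ) * E 5 * E 3) * hv5
    + ((40320:ℂ) * E 6 * E 2) * hv6
    + ((40320:ℂ) * E 7 * E 1) * hv7
    + ((40320:ℂ) * E 8 * E 0) * hv8
    + (5040 * E 8) * hE0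
end

section
/- For every natural number d, the following identity holds in ℚ: 15! times the coefficient of t¹⁵ in the polynomial (1 + t + t²/2 + t³/6)^d equals (d−4)·(d−3)·(d−2)·(d−1)·d·(d¹⁰ + 10d⁹ + 65d⁸ − 1015d⁷ + 63d⁶ − 10885d⁵ + 190560d⁴ − 658885d³ + 1358936d² − 3034850d + 3503500). -/
open Polynomial

noncomputable def Pl : ℚ[X] := 1 + X + C ((1 : ℚ)/2) * X ^ 2 + C ((1 : ℚ)/6) * X ^ 3

lemma step (p : ℚ[X]) (m : ℕ) :
    (p * Pl).coeff (m + 3) =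
      p.coeff (m + 3) + p.coeff (m + 2) + (1/2) * p.coeff (m + 1) + (1/6) * p.coeff m := by
  have h1 : (p * X).coeff (m + 3) = p.coeff (m + 2) := coeff_mul_X p (m + 2)
  have h2 : (p * X ^ 2).coeff (m + 3) = p.coeff (m + 1) := coeff_mul_X_pow p 2 (m + 1)
  have h3 : (p * X ^ 3).coeff (m + 3) = p.coeff m := coeff_mul_X_pow p 3 m
  simp only [Pl, mul_add, mul_one, coeff_add, h1, mul_left_comm p (C ((1 : ℚ)/2)),
    mul_left_comm p (C ((1 : ℚ)/6)), coeff_C_mul, h2, h3]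
  try ring

lemma step2 (p : ℚ[X]) :
    (p * Pl).coeff 2 = p.coeff 2 + p.coeff 1 + (1/2) * p.coeff 0 := by
  have h1 : (p * X).coeff 2 = p.coeff 1 := coeff_mul_X p 1
  have h2 : (p * X ^ 2).coeff 2 = p.coeff 0 := coeff_mul_X_pow p 2 0
  have h3 : (p * X ^ 3).coeff 2 = 0 := by simpa using coeff_mul_X_pow' p 3 2
  simp only [Pl, mul_add, mul_one, coeff_add, h1, mul_left_comm p (C ((1 : ℚ)/2)),
    mul_left_comm p (C ((1 : ℚ)/6)), coeff_C_mul, h2, h3]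
  try ring

lemma step1 (p : ℚ[X]) : (p * Pl).coeff 1 = p.coeff 1 + p.coeff 0 := by
  have h1 : (p * X).coeff 1 = p.coeff 0 := coeff_mul_X p 0
  have h2 : (p * X ^ 2).coeff 1 = 0 := by simpa using coeff_mul_X_pow' p 2 1
  have h3 : (p * X ^ 3).coeff 1 = 0 := by simpa using coeff_mul_X_pow' p 3 1
  simp only [Pl, mul_add, mul_one, coeff_add, h1, mul_left_comm p (C ((1 : ℚ)/2)),
    mul_left_comm p (C ((1 : ℚ)/6)), coeff_C_mul, h2, h3]
  try ring

lemma step0 (p : ℚ[X]) : (p * Pl).coeff 0 = p.coeff 0 := by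
  have h1 : (p * X).coeff 0 = 0 := by simpa using coeff_mul_X_pow' p 1 0
  have h2 : (p * X ^ 2).coeff 0 = 0 := by simpa using coeff_mul_X_pow' p 2 0
  have h3 : (p * X ^ 3).coeff 0 = 0 := by simpa using coeff_mul_X_pow' p 3 0
  simp only [Pl, mul_add, mul_one, coeff_add, h1, mul_left_comm p (C ((1 : ℚ)/2)),
    mul_left_comm p (C ((1 : ℚ)/6)), coeff_C_mul, h2, h3]
  try ring

noncomputable def cf0 (x : ℚ) : ℚ := (1 : ℚ)

noncomputable def cf1 (x : ℚ) : ℚ := (1 : ℚ) * x ^ 1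

noncomputable def cf2 (x : ℚ) : ℚ := (1/2 : ℚ) * x ^ 2

noncomputable def cf3 (x : ℚ) : ℚ := (1/6 : ℚ) * x ^ 3

noncomputable def cf4 (x : ℚ) : ℚ := (-1/24 : ℚ) * x ^ 1 + (1/24 : ℚ) * x ^ 4

noncomputable def cf5 (x : ℚ) : ℚ := (1/30 : ℚ) * x ^ 1 + (-1/24 : ℚ) * x ^ 2 + (1/120 : ℚ) * x ^ 5

noncomputable def cf6 (x : ℚ) : ℚ := (-1/72 : ℚ) * x ^ 1 + (1/30 : ℚ) * x ^ 2 + (-1/48 : ℚ) * x ^ 3 + (1/720 : ℚ) * x ^ 6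

noncomputable def cf7 (x : ℚ) : ℚ := (1/252 : ℚ) * x ^ 1 + (-1/72 : ℚ) * x ^ 2 + (1/60 : ℚ) * x ^ 3 + (-1/144 : ℚ) * x ^ 4 + (1/5040 : ℚ) * x ^ 7

noncomputable def cf8 (x : ℚ) : ℚ := (-1/576 : ℚ) * x ^ 1 + (13/2688 : ℚ) * x ^ 2 + (-1/144 : ℚ) * x ^ 3 + (1/180 : ℚ) * x ^ 4 + (-1/576 : ℚ) * x ^ 5 + (1/40320 : ℚ) * x ^ 8

noncomputable def cf9 (x : ℚ) : ℚ := (1/648 : ℚ) * x ^ 1 + (-1/320 : ℚ) * x ^ 2 + (23/8064 : ℚ) * x ^ 3 + (-1/432 : ℚ) * x ^ 4 + (1/720 : ℚ) * x ^ 5 + (-1/2880 : ℚ) * x ^ 6 + (1/362880 : ℚ) * x ^ 9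

noncomputable def cf10 (x : ℚ) : ℚ := (-1/864 : ℚ) * x ^ 1 + (347/129600 : ℚ) * x ^ 2 + (-13/5760 : ℚ) * x ^ 3 + (53/48384 : ℚ) * x ^ 4 + (-1/1728 : ℚ) * x ^ 5 + (1/3600 : ℚ) * x ^ 6 + (-1/17280 : ℚ) * x ^ 7 + (1/3628800 : ℚ) * x ^ 10

noncomputable def cf11 (x : ℚ) : ℚ := (1/1584 : ℚ) * x ^ 1 + (-1/560 : ℚ) * x ^ 2 + (247/129600 : ℚ) * x ^ 3 + (-17/17280 : ℚ) * x ^ 4 + (5/16128 : ℚ) * x ^ 5 + (-1/8640 : ℚ) * x ^ 6 + (1/21600 : ℚ) * x ^ 7 + (-1/120960 : ℚ) * x ^ 8 + (1/39916800 : ℚ) * x ^ 11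

noncomputable def cf12 (x : ℚ) : ℚ := (-1/3456 : ℚ) * x ^ 1 + (14887/15966720 : ℚ) * x ^ 2 + (-3539/2903040 : ℚ) * x ^ 3 + (641/777600 : ℚ) * x ^ 4 + (-7/23040 : ℚ) * x ^ 5 + (67/967680 : ℚ) * x ^ 6 + (-1/51840 : ℚ) * x ^ 7 + (1/151200 : ℚ) * x ^ 8 + (-1/967680 : ℚ) * x ^ 9 + (1/479001600 : ℚ) * x ^ 12

noncomputable def cf13 (x : ℚ) : ℚ := (5/33696 : ℚ) * x ^ 1 + (-127/272160 : ℚ) * x ^ 2 + (10309/15966720 : ℚ) * x ^ 3 + (-1507/2903040 : ℚ) * x ^ 4 + (197/777600 : ℚ) * x ^ 5 + (-1/13824 : ℚ) * x ^ 6 + (37/2903040 : ℚ) * x ^ 7 + (-1/362880 : ℚ) * x ^ 8 + (1/1209600 : ℚ) * x ^ 9 + (-1/8709120 : ℚ) * x ^ 10 + (1/6227020800 : ℚ) * x ^ 13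

noncomputable def cf14 (x : ℚ) : ℚ := (-1/10368 : ℚ) * x ^ 1 + (110969/396264960 : ℚ) * x ^ 2 + (-15553/43545600 : ℚ) * x ^ 3 + (9091/31933440 : ℚ) * x ^ 4 + (-923/5806080 : ℚ) * x ^ 5 + (187/3110400 : ℚ) * x ^ 6 + (-29/2073600 : ℚ) * x ^ 7 + (1/501760 : ℚ) * x ^ 8 + (-1/2903040 : ℚ) * x ^ 9 + (1/10886400 : ℚ) * x ^ 10 + (-1/87091200 : ℚ) * x ^ 11 + (1/87178291200 : ℚ) * x ^ 14

noncomputable def cf15 (x : ℚ) : ℚ := (1/15552 : ℚ) * x ^ 1 + (-13627/71850240 : ℚ) * x ^ 2 + (1162801/4953312000 : ℚ) * x ^ 3 + (-7493/43545600 : ℚ) * x ^ 4 + (8713/95800320 : ℚ) * x ^ 5 + (-659/17418240 : ℚ) * x ^ 6 + (541/46656000 : ℚ) * x ^ 7 + (-11/4838400 : ℚ) * x ^ 8 + (11/40642560 : ℚ) * x ^ 9 + (-1/26127360 : ℚ) * x ^ 10 + (1/108864000 : ℚ) * x ^ 11 + (-1/958003200 : ℚ) * x ^ 12 + (1/1307674368000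 : ℚ) * x ^ 15

lemma Lc0 (d : ℕ) : (Pl ^ d).coeff 0 = cf0 (d : ℚ) := by
  induction d with
  | zero => simp [coeff_one, cf0]
  | succ n ih =>
    rw [pow_succ]
    rw [step0, ih]; rfl

lemma Lc1 (d : ℕ) : (Pl ^ d).coeff 1 = cf1 (d : ℚ) := by
  induction d with
  | zero => simp [coeff_one, cf1]
  | succ n ih =>
    rw [pow_succ]
    rw [step1, ih, Lc0]
    simp only [cf0, cf1]
    push_cast
    ring

lemma Lc2 (d : ℕ) : (Pl ^ d).coeff 2 = cf2 (d : ℚ) := by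
  induction d with
  | zero => simp [coeff_one, cf2]
  | succ n ih =>
    rw [pow_succ]
    rw [step2, ih, Lc1, Lc0]
    simp only [cf0, cf1, cf2]
    push_cast
    ring

lemma Lc3 (d : ℕ) : (Pl ^ d).coeff 3 = cf3 (d : ℚ) := by
  induction d with
  | zero => simp [coeff_one, cf3]
  | succ n ih =>
    rw [pow_succ]
    rw [show (3 : ℕ) = 0 + 3 from rfl, step, ih, Lc2 n, Lc1 n, Lc0 n]
    simp only [cf0, cf1, cf2, cf3]
    push_cast
    ring

lemma Lc4 (d : ℕ) : (Pl ^ d).coeff 4 = cf4 (d : ℚ) := by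
  induction d with
  | zero => simp [coeff_one, cf4]
  | succ n ih =>
    rw [pow_succ]
    rw [show (4 : ℕ) = 1 + 3 from rfl, step, ih, Lc3 n, Lc2 n, Lc1 n]
    simp only [cf1, cf2, cf3, cf4]
    push_cast
    ring

lemma Lc5 (d : ℕ) : (Pl ^ d).coeff 5 = cf5 (d : ℚ) := by
  induction d with
  | zero => simp [coeff_one, cf5]
  | succ n ih =>
    rw [pow_succ]
    rw [show (5 : ℕ) = 2 + 3 from rfl, step, ih, Lc4 n, Lc3 n, Lc2 n]
    simp only [cf2, cf3, cf4, cf5]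
    push_cast
    ring

lemma Lc6 (d : ℕ) : (Pl ^ d).coeff 6 = cf6 (d : ℚ) := by
  induction d with
  | zero => simp [coeff_one, cf6]
  | succ n ih =>
    rw [pow_succ]
    rw [show (6 : ℕ) = 3 + 3 from rfl, step, ih, Lc5 n, Lc4 n, Lc3 n]
    simp only [cf3, cf4, cf5, cf6]
    push_cast
    ring

lemma Lc7 (d : ℕ) : (Pl ^ d).coeff 7 = cf7 (d : ℚ) := by
  induction d with
  | zero => simp [coeff_one, cf7]
  | succ n ih =>
    rw [pow_succ]
    rw [show (7 : ℕ) = 4 + 3 from rfl, step, ih, Lc6 n, Lc5 n, Lc4 n]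
    simp only [cf4, cf5, cf6, cf7]
    push_cast
    ring

lemma Lc8 (d : ℕ) : (Pl ^ d).coeff 8 = cf8 (d : ℚ) := by
  induction d with
  | zero => simp [coeff_one, cf8]
  | succ n ih =>
    rw [pow_succ]
    rw [show (8 : ℕ) = 5 + 3 from rfl, step, ih, Lc7 n, Lc6 n, Lc5 n]
    simp only [cf5, cf6, cf7, cf8]
    push_cast
    ring

lemma Lc9 (d : ℕ) : (Pl ^ d).coeff 9 = cf9 (d : ℚ) := by
  induction d with
  | zero => simp [coeff_one, cf9]
  | succ n ih =>
    rw [pow_succ]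
    rw [show (9 : ℕ) = 6 + 3 from rfl, step, ih, Lc8 n, Lc7 n, Lc6 n]
    simp only [cf6, cf7, cf8, cf9]
    push_cast
    ring

lemma Lc10 (d : ℕ) : (Pl ^ d).coeff 10 = cf10 (d : ℚ) := by
  induction d with
  | zero => simp [coeff_one, cf10]
  | succ n ih =>
    rw [pow_succ]
    rw [show (10 : ℕ) = 7 + 3 from rfl, step, ih, Lc9 n, Lc8 n, Lc7 n]
    simp only [cf7, cf8, cf9, cf10]
    push_cast
    ring

lemma Lc11 (d : ℕ) : (Pl ^ d).coeff 11 = cf11 (d : ℚ) := by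
  induction d with
  | zero => simp [coeff_one, cf11]
  | succ n ih =>
    rw [pow_succ]
    rw [show (11 : ℕ) = 8 + 3 from rfl, step, ih, Lc10 n, Lc9 n, Lc8 n]
    simp only [cf8, cf9, cf10, cf11]
    push_cast
    ring

lemma Lc12 (d : ℕ) : (Pl ^ d).coeff 12 = cf12 (d : ℚ) := by
  induction d with
  | zero => simp [coeff_one, cf12]
  | succ n ih =>
    rw [pow_succ]
    rw [show (12 : ℕ) = 9 + 3 from rfl, step, ih, Lc11 n, Lc10 n, Lc9 n]
    simp only [cf9, cf10, cf11, cf12]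
    push_cast
    ring

lemma Lc13 (d : ℕ) : (Pl ^ d).coeff 13 = cf13 (d : ℚ) := by
  induction d with
  | zero => simp [coeff_one, cf13]
  | succ n ih =>
    rw [pow_succ]
    rw [show (13 : ℕ) = 10 + 3 from rfl, step, ih, Lc12 n, Lc11 n, Lc10 n]
    simp only [cf10, cf11, cf12, cf13]
    push_cast
    ring

lemma Lc14 (d : ℕ) : (Pl ^ d).coeff 14 = cf14 (d : ℚ) := by
  induction d with
  | zero => simp [coeff_one, cf14]
  | succ n ih =>
    rw [pow_succ]
    rw [show (14 : ℕ) = 11 + 3 from rfl, step, ih, Lc13 n, Lc12 n, Lc11 n]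
    simp only [cf11, cf12, cf13, cf14]
    push_cast
    ring

lemma Lc15 (d : ℕ) : (Pl ^ d).coeff 15 = cf15 (d : ℚ) := by
  induction d with
  | zero => simp [coeff_one, cf15]
  | succ n ih =>
    rw [pow_succ]
    rw [show (15 : ℕ) = 12 + 3 from rfl, step, ih, Lc14 n, Lc13 n, Lc12 n]
    simp only [cf12, cf13, cf14, cf15]
    push_cast
    ring

theorem plane_arrangement_P3_predegree (d : ℕ) :
    ((15 : ℕ).factorial : ℚ) *
        (((1 + X + C ((1 : ℚ)/2) * X ^ 2 + C ((1 : ℚ)/6) * X ^ 3) ^ d).coeff 15) =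
      ((d : ℚ) - 4) * ((d : ℚ) - 3) * ((d : ℚ) - 2) * ((d : ℚ) - 1) * (d : ℚ) *
        ((d : ℚ) ^ 10 + 10 * (d : ℚ) ^ 9 + 65 * (d : ℚ) ^ 8 - 1015 * (d : ℚ) ^ 7
          + 63 * (d : ℚ) ^ 6 - 10885 * (d : ℚ) ^ 5 + 190560 * (d : ℚ) ^ 4
          - 658885 * (d : ℚ) ^ 3 + 1358936 * (d : ℚ) ^ 2 - 3034850 * (d : ℚ)
          + 3503500) := by
  have h : (1 + X + C ((1 : ℚ)/2) * X ^ 2 + C ((1 : ℚ)/6) * X ^ 3) = Pl := rfl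
  rw [h, Lc15, cf15]
  norm_num [Nat.factorial]
  ring
end

section
/- Let K be a field of characteristic 0 and let A, B, C ∈ K[T] be polynomials. For t ∈ K let γ(t) denote the 3×3 matrix over K with rows (1,0,0), (A(t),1,0), (B(t),C(t),1). Then γ(s+t) = γ(s)·γ(t) for all s,t ∈ K if and only if there exist constants a, b, c ∈ K such that A(t) = a·t, C(t) = c·t, and B(t) = b·t + (a·c/2)·t² for all t ∈ K. -/
open Polynomial

private lemma additive_poly_linear {K : Type*} [Field K] [CharZero K] (P : Polynomial K)
    (h : ∀ s t : K, P.eval (s + t) = P.eval s + P.eval t) :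
    ∃ a : K, ∀ t : K, P.eval t = a * t := by
  have h0 : P.eval 0 = 0 := by have := h 0 0; simpa using this
  have hcomp : ∀ t : K, P.comp (X + Polynomial.C t) = P + Polynomial.C (P.eval t) := by
    intro t
    apply Polynomial.funext
    intro s
    simp [Polynomial.eval_comp, h s t]
  have hderiv : ∀ t : K, (derivative P).comp (X + Polynomial.C t) = derivative P := by
    intro t
    have := congrArg derivative (hcomp t)
    simpa [Polynomial.derivative_comp] using this
  set a := (derivative P).eval 0 with ha
  have haconst : ∀ t : K, (derivative P).eval t = a := by
    intro t
    have := congrArg (Polynomial.eval 0) (hderiv t)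
    simpa [Polynomial.eval_comp, ha] using this
  have hdP : derivative P = Polynomial.C a := by
    apply Polynomial.funext
    intro s
    simp [haconst s]
  have hR : derivative (P - Polynomial.C a * X) = 0 := by
    simp [hdP]
  have := Polynomial.eq_C_of_derivative_eq_zero hR
  refine ⟨a, fun t => ?_⟩
  have h1 := congrArg (Polynomial.eval t) this
  have h2 := congrArg (Polynomial.eval 0) this
  simp at h1 h2
  linear_combination h1 - h2 + h0

theorem additive_one_parameter_subgroup_classification
    {K : Type*} [Field K] [CharZero K] (A B C : Polynomial K)
    (γ : K → Matrix (Fin 3) (Fin 3) K)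
    (hγ : ∀ t, γ t = !![1, 0, 0; A.eval t, 1, 0; B.eval t, C.eval t, 1]) :
    (∀ s t : K, γ (s + t) = γ s * γ t) ↔
      ∃ a b c : K,
        (∀ t : K, A.eval t = a * t) ∧
        (∀ t : K, C.eval t = c * t) ∧
        (∀ t : K, B.eval t = b * t + (a * c / 2) * t ^ 2) := by
  constructor
  · intro hst
    have hA : ∀ s t : K, A.eval (s + t) = A.eval s + A.eval t := by
      intro s t
      have h := hst s t
      rw [hγ, hγ, hγ] at h
      have := congrFun (congrFun h 1) 0
      simpa [Matrix.mul_apply, Fin.sum_univ_three] using this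
    have hC : ∀ s t : K, C.eval (s + t) = C.eval s + C.eval t := by
      intro s t
      have h := hst s t
      rw [hγ, hγ, hγ] at h
      have := congrFun (congrFun h 2) 1
      simpa [Matrix.mul_apply, Fin.sum_univ_three] using this
    have hB : ∀ s t : K, B.eval (s + t) = B.eval s + B.eval t + C.eval s * A.eval t := by
      intro s t
      have h := hst s t
      rw [hγ, hγ, hγ] at h
      have := congrFun (congrFun h 2) 0
      simp [Matrix.mul_apply, Fin.sum_univ_three] at this
      linear_combination this
    obtain ⟨a, haA⟩ := additive_poly_linear A hA
    obtain ⟨c, hcC⟩ := additive_poly_linear C hC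
    -- D := B - (a*c/2) X^2 is additive
    have hD : ∀ s t : K, (B - Polynomial.C (a * c / 2) * X ^ 2).eval (s + t)
        = (B - Polynomial.C (a * c / 2) * X ^ 2).eval s
          + (B - Polynomial.C (a * c / 2) * X ^ 2).eval t := by
      intro s t
      simp only [Polynomial.eval_sub, Polynomial.eval_mul, Polynomial.eval_C,
        Polynomial.eval_pow, Polynomial.eval_X]
      rw [hB s t, hcC s, haA t]
      ring
    obtain ⟨b, hbD⟩ := additive_poly_linear _ hD
    refine ⟨a, b, c, haA, hcC, fun t => ?_⟩
    have := hbD t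
    simp only [Polynomial.eval_sub, Polynomial.eval_mul, Polynomial.eval_C,
      Polynomial.eval_pow, Polynomial.eval_X] at this
    linear_combination this
  · rintro ⟨a, b, c, hA, hC, hB⟩ s t
    rw [hγ, hγ, hγ]
    ext i j
    fin_cases i <;> fin_cases j <;>
      simp [Matrix.mul_apply, Fin.sum_univ_three, hA, hC, hB] <;> ring
end

section
/- Let K be a field of characteristic 0 and a, b, c ∈ K with a ≠ 0 and c ≠ 0. For t ∈ K let γ(t) denote the 3×3 matrix with rows (1,0,0), (a·t,1,0), (b·t+(a·c/2)·t², c·t, 1). A homogeneous polynomial F ∈ K[x,y,z] of degree 2 satisfies F∘γ(t) = F for all t ∈ K if and only if F is a K-linear combination of x² and c·y² + 2b·x·y − 2a·x·z. -/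
/-!
Invariance of `F` under `γ(t)` can be tested on points of `K³`, since `K` is infinite.
Writing a quadratic form with six coefficients and comparing `F(γ(t) x) = F(x)` at `t = ±1` and a
few points `x` forces the coefficients of `z²` and `yz` to vanish and ties those of `xy` and `xz` to
that of `y²`; conversely the two conics of the pencil are invariant by a direct computation.
-/

open MvPolynomial

/-- The polynomial `F ∘ M`, obtained by substituting the variable `i` by
`∑ j, M i j * X j` in `F`. -/
noncomputable def applyMatrix {K : Type*} [Field K]
    (M : Matrix (Fin 3) (Fin 3) K) (F : MvPolynomial (Fin 3) K) :
    MvPolynomial (Fin 3) K :=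
  aeval (fun i => ∑ j : Fin 3, C (M i j) * X j) F

theorem MvPolynomial.IsHomogeneous.eq_sum_antidiagonalTuple {R : Type*} [CommSemiring R]
    {n d : ℕ} {F : MvPolynomial (Fin n) R} (hF : F.IsHomogeneous d) :
    F = ∑ g ∈ Finset.Nat.antidiagonalTuple n d,
      monomial (Finsupp.equivFunOnFinite.symm g) (coeff (Finsupp.equivFunOnFinite.symm g) F) := by
  let e : (Fin n → ℕ) ↪ (Fin n →₀ ℕ) := Finsupp.equivFunOnFinite.symm.toEmbedding
  calc F = ∑ m ∈ F.support, monomial m (coeff m F) := F.as_sum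
    _ = ∑ m ∈ (Finset.Nat.antidiagonalTuple n d).map e, monomial m (coeff m F) := by
      refine Finset.sum_subset (fun m hm => ?_) (fun m _ hm => ?_)
      · have hdeg := hF (mem_support_iff.mp hm)
        rw [Finsupp.weight_apply, Finsupp.sum_fintype _ _ (by simp)] at hdeg
        simpa [e, Finset.Nat.mem_antidiagonalTuple] using hdeg
      · rw [notMem_support_iff.mp hm, monomial_zero]
    _ = _ := Finset.sum_map _ _ _

section

open Matrix

variable {K : Type*} [Field K]

noncomputable def ternaryQuadratic (p q r s u v : K) : MvPolynomial (Fin 3) K :=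
  C p * X 0 ^ 2 + C q * X 1 ^ 2 + C r * X 2 ^ 2 + C s * (X 0 * X 1) + C u * (X 0 * X 2) +
    C v * (X 1 * X 2)

theorem MvPolynomial.IsHomogeneous.exists_eq_ternaryQuadratic {F : MvPolynomial (Fin 3) K}
    (hF : F.IsHomogeneous 2) : ∃ p q r s u v : K, F = ternaryQuadratic p q r s u v := by
  have hlist : Finset.Nat.antidiagonalTuple 3 2 =
      {![2, 0, 0], ![0, 2, 0], ![0, 0, 2], ![1, 1, 0], ![1, 0, 1], ![0, 1, 1]} := by decide
  rw [hF.eq_sum_antidiagonalTuple, hlist]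
  simp only [ternaryQuadratic, add_assoc]
  simp only [Finset.sum_insert, Finset.mem_insert, Finset.mem_singleton, Finset.sum_singleton,
    vecCons_inj, OfNat.ofNat_ne_zero, OfNat.zero_ne_ofNat, OfNat.ofNat_ne_one, zero_ne_one,
    one_ne_zero, and_false, false_and, or_self, not_false_eq_true, monomial_eq,
    Finsupp.prod_fintype, Finsupp.equivFunOnFinite_symm_apply_apply, Fin.prod_univ_three, cons_val,
    pow_zero, pow_one, mul_one, one_mul, implies_true]
  exact ⟨_, _, _, _, _, _, rfl⟩

theorem eval_applyMatrix (M : Matrix (Fin 3) (Fin 3) K) (F : MvPolynomial (Fin 3) K)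
    (x : Fin 3 → K) : eval x (applyMatrix M F) = eval (M *ᵥ x) F := by
  induction F using MvPolynomial.induction_on <;> simp_all [applyMatrix, mulVec, dotProduct]

theorem applyMatrix_eq_self_iff [Infinite K] (M : Matrix (Fin 3) (Fin 3) K)
    (F : MvPolynomial (Fin 3) K) :
    applyMatrix M F = F ↔ ∀ x, eval (M *ᵥ x) F = eval x F := by
  simp [MvPolynomial.funext_iff, eval_applyMatrix]

def unipotentMatrix (a b c t : K) : Matrix (Fin 3) (Fin 3) K :=
  !![1, 0, 0; a * t, 1, 0; b * t + (a * c / 2) * t ^ 2, c * t, 1]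

theorem unipotentMatrix_mulVec (a b c t : K) (x : Fin 3 → K) :
    unipotentMatrix a b c t *ᵥ x =
      ![x 0, a * t * x 0 + x 1, (b * t + a * c / 2 * t ^ 2) * x 0 + c * t * x 1 + x 2] := by
  ext i
  fin_cases i <;> simp [unipotentMatrix, mulVec, dotProduct, Fin.sum_univ_three]

noncomputable def invariantConic (a b c : K) : MvPolynomial (Fin 3) K :=
  C c * X 1 ^ 2 + C (2 * b) * X 0 * X 1 - C (2 * a) * X 0 * X 2

theorem applyMatrix_unipotentMatrix_C_mul_add_C_mul_invariantConic [CharZero K]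
    (a b c t α β : K) :
    applyMatrix (unipotentMatrix a b c t) (C α * X 0 ^ 2 + C β * invariantConic a b c) =
      C α * X 0 ^ 2 + C β * invariantConic a b c := by
  refine (applyMatrix_eq_self_iff _ _).mpr fun x => ?_
  simp only [unipotentMatrix_mulVec, invariantConic, map_add, map_sub, map_mul, map_pow, eval_C,
    eval_X, Matrix.cons_val]
  ring

theorem ternaryQuadratic_eq_of_forall_applyMatrix_unipotentMatrix [CharZero K] {a b c : K}
    (ha : a ≠ 0) (hc : c ≠ 0) {p q r s u v : K}
    (hF : ∀ t, applyMatrix (unipotentMatrix a b c t) (ternaryQuadratic p q r s u v) =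
      ternaryQuadratic p q r s u v) :
    ternaryQuadratic p q r s u v = C p * X 0 ^ 2 + C (q / c) * invariantConic a b c := by
  have heval : ∀ t x₀ x₁ x₂ : K,
      p * x₀ ^ 2 + q * (a * t * x₀ + x₁) ^ 2
        + r * ((b * t + a * c / 2 * t ^ 2) * x₀ + c * t * x₁ + x₂) ^ 2
        + s * (x₀ * (a * t * x₀ + x₁))
        + u * (x₀ * ((b * t + a * c / 2 * t ^ 2) * x₀ + c * t * x₁ + x₂))
        + v * ((a * t * x₀ + x₁) * ((b * t + a * c / 2 * t ^ 2) * x₀ + c * t * x₁ + x₂))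
      = p * x₀ ^ 2 + q * x₁ ^ 2 + r * x₂ ^ 2 + s * (x₀ * x₁) + u * (x₀ * x₂) + v * (x₁ * x₂) := by
    intro t x₀ x₁ x₂
    simpa [ternaryQuadratic, unipotentMatrix_mulVec] using
      (applyMatrix_eq_self_iff _ _).mp (hF t) ![x₀, x₁, x₂]
  -- Comparing `t = 1` with `t = -1` separates the parts of odd and even degree in `t`.
  have hrv₁ : r * c ^ 2 + v * c = 0 := by linear_combination heval 1 0 1 0
  have hrv₂ : r * c ^ 2 - v * c = 0 := by linear_combination heval (-1) 0 1 0
  have hv : v = 0 := by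
    have : v * c = 0 := by linear_combination (hrv₁ - hrv₂) / 2
    exact (mul_eq_zero.mp this).resolve_right hc
  have hr : r = 0 := by
    have : r * c ^ 2 = 0 := by linear_combination (hrv₁ + hrv₂) / 2
    exact (mul_eq_zero.mp this).resolve_right (pow_ne_zero 2 hc)
  subst hv hr
  have hu : u * c = -(2 * a * q) := by linear_combination heval 1 1 1 0 - heval 1 1 0 0
  have hs : s * c = 2 * b * q := by
    have hsa : s * a + u * b = 0 := by linear_combination (heval 1 1 0 0 - heval (-1) 1 0 0) / 2
    have : a * (s * c - 2 * b * q) = 0 := by linear_combination c * hsa - b * hu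
    linear_combination (mul_eq_zero.mp this).resolve_left ha
  refine MvPolynomial.funext fun x => ?_
  simp only [ternaryQuadratic, invariantConic, map_add, map_sub, map_mul, map_pow, eval_C, eval_X]
  field_simp
  linear_combination x 0 * x 1 * hs + x 0 * x 2 * hu

end

theorem invariant_conics_of_additive_subgroup
    {K : Type*} [Field K] [CharZero K] (a b c : K) (ha : a ≠ 0) (hc : c ≠ 0)
    (γ : K → Matrix (Fin 3) (Fin 3) K)
    (hγ : ∀ t, γ t = !![1, 0, 0; a * t, 1, 0;
        b * t + (a * c / 2) * t ^ 2, c * t, 1])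
    (F : MvPolynomial (Fin 3) K) (hF : F.IsHomogeneous 2) :
    (∀ t : K, applyMatrix (γ t) F = F) ↔
      ∃ α β : K,
        F = MvPolynomial.C α * (X 0) ^ 2 +
          MvPolynomial.C β *
            (MvPolynomial.C c * (X 1) ^ 2 + MvPolynomial.C (2 * b) * X 0 * X 1
              - MvPolynomial.C (2 * a) * X 0 * X 2) := by
  obtain rfl : γ = unipotentMatrix a b c := funext hγ
  constructor
  · intro hinv
    obtain ⟨p, q, r, s, u, v, rfl⟩ := hF.exists_eq_ternaryQuadratic
    exact ⟨p, q / c, ternaryQuadratic_eq_of_forall_applyMatrix_unipotentMatrix ha hc hinv⟩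
  · rintro ⟨α, β, rfl⟩ t
    exact applyMatrix_unipotentMatrix_C_mul_add_C_mul_invariantConic a b c t α β
end

section
/- Let K be an algebraically closed field of characteristic 0, and let a, b be coprime natural numbers with 0 ≤ 2a ≤ b and b ≥ 1. Suppose F ∈ K[x,y,z] is irreducible and homogeneous, and for every t ∈ K with t ≠ 0 there exists λ(t) ∈ K, λ(t) ≠ 0, such that F(x, t^a·y, t^b·z) = λ(t)·F(x,y,z). Then F is a nonzero scalar multiple of one of: x, y, z, or y^b + μ·x^{b−a}·z^a for some μ ∈ K, μ ≠ 0. -/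
open MvPolynomial

section Helpers

variable {K : Type*} [Field K]

private lemma monomial_fin3 (m : Fin 3 →₀ ℕ) (c : K) :
    monomial m c = C c * X 0 ^ m 0 * X 1 ^ m 1 * X 2 ^ m 2 := by
  rw [monomial_eq, Finsupp.prod_fintype _ _ (fun i => pow_zero _), Fin.prod_univ_three]
  ring

private lemma mv_isUnit_eq_C :
    ∀ {n : ℕ} (G : MvPolynomial (Fin n) K), IsUnit G → ∃ c : K, c ≠ 0 ∧ G = C c := by
  intro n
  induction n with
  | zero =>
    intro G hG
    refine ⟨isEmptyRingEquiv K (Fin 0) G, ?_, ?_⟩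
    · intro h
      have := hG.map (isEmptyRingEquiv K (Fin 0))
      rw [h] at this
      exact not_isUnit_zero this
    · have h1 := (isEmptyRingEquiv K (Fin 0)).symm_apply_apply G
      have h2 : (isEmptyRingEquiv K (Fin 0)).symm (isEmptyRingEquiv K (Fin 0) G)
          = C (isEmptyRingEquiv K (Fin 0) G) := rfl
      rw [h2] at h1
      exact h1.symm
  | succ n ih =>
    intro G hG
    have h1 : IsUnit (finSuccEquiv K n G) := hG.map _
    obtain ⟨u, hu, hCu⟩ := Polynomial.isUnit_iff.mp h1
    obtain ⟨c, hc, rfl⟩ := ih u hu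
    refine ⟨c, hc, ?_⟩
    apply (finSuccEquiv K n).injective
    rw [← hCu]
    have : (C c : MvPolynomial (Fin (n+1)) K) = algebraMap K _ c := rfl
    rw [this, AlgEquiv.commutes]
    rfl

private lemma aeval_diag (t : K) (a b : ℕ) (F : MvPolynomial (Fin 3) K) (m : Fin 3 →₀ ℕ) :
    coeff m (aeval ![(X 0 : MvPolynomial (Fin 3) K), C (t ^ a) * X 1, C (t ^ b) * X 2] F)
      = t ^ (a * m 1 + b * m 2) * coeff m F := by
  have key : ∀ (m' : Fin 3 →₀ ℕ) (c' : K),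
      aeval ![(X 0 : MvPolynomial (Fin 3) K), C (t ^ a) * X 1, C (t ^ b) * X 2] (monomial m' c')
        = monomial m' (t ^ (a * m' 1 + b * m' 2) * c') := by
    intro m' c'
    rw [aeval_monomial, Finsupp.prod_fintype _ _ (fun i => pow_zero _), Fin.prod_univ_three]
    simp only [Matrix.cons_val_zero, Matrix.cons_val_one, Matrix.head_cons,
      Matrix.cons_val_two, Matrix.tail_cons]
    rw [mul_pow, mul_pow, ← map_pow, ← map_pow, ← pow_mul, ← pow_mul]
    rw [monomial_fin3]
    rw [pow_add, map_mul, map_mul]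
    have : (algebraMap K (MvPolynomial (Fin 3) K)) c' = C c' := rfl
    rw [this]
    ring
  conv_lhs => rw [F.as_sum, map_sum]
  rw [coeff_sum]
  simp_rw [key, coeff_monomial]
  rw [Finset.sum_ite_eq' F.support m (fun m' => t ^ (a * m' 1 + b * m' 2) * coeff m' F)]
  by_cases hm : m ∈ F.support
  · rw [if_pos hm]
  · rw [if_neg hm, notMem_support_iff.mp hm, mul_zero]

private lemma mv_not_unit_of_eval_zero (p : MvPolynomial (Fin 3) K) (g : Fin 3 → K)
    (h : eval g p = 0) : ¬ IsUnit p := by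
  intro hu
  have := hu.map (eval g)
  rw [h] at this
  exact not_isUnit_zero this

private lemma factor_step {K : Type*} [Field K] [IsAlgClosed K]
    (u v : MvPolynomial (Fin 3) K) (M : ℕ) (hM : 1 ≤ M) (c : ℕ → K)
    (hcM : c M ≠ 0) (hc0 : c 0 ≠ 0) :
    ∃ r : K, r ≠ 0 ∧
      (u - C r * v) ∣ ∑ s ∈ Finset.range (M + 1), C (c s) * u ^ s * v ^ (M - s) := by
  classical
  set P : Polynomial K := ∑ s ∈ Finset.range (M + 1), Polynomial.C (c s) * Polynomial.X ^ s
    with hP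
  have hcoeffM : P.coeff M = c M := by
    rw [hP, Polynomial.finset_sum_coeff]
    rw [Finset.sum_eq_single M]
    · simp
    · intro t ht htM
      simp [Polynomial.coeff_C_mul, Polynomial.coeff_X_pow, Ne.symm htM]
    · intro h; exact absurd (Finset.self_mem_range_succ M) h
  have hdeg : 0 < P.degree := by
    have h1 : M ≤ P.natDegree := Polynomial.le_natDegree_of_ne_zero (hcoeffM ▸ hcM)
    exact Polynomial.natDegree_pos_iff_degree_pos.mp (by omega)
  obtain ⟨r, hr⟩ := IsAlgClosed.exists_root P hdeg.ne'
  have hevalr : ∑ s ∈ Finset.range (M + 1), c s * r ^ s = 0 := by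
    have h1 : P.eval r = 0 := hr
    rw [hP, Polynomial.eval_finset_sum] at h1
    simpa using h1
  have hr0 : r ≠ 0 := by
    rintro rfl
    apply hc0
    rw [Finset.sum_eq_single 0] at hevalr
    · simpa using hevalr
    · intro t ht ht0; simp [zero_pow ht0]
    · simp
  refine ⟨r, hr0, ?_⟩
  set H : Polynomial (MvPolynomial (Fin 3) K) :=
    ∑ s ∈ Finset.range (M + 1), Polynomial.C (C (c s) * v ^ (M - s)) * Polynomial.X ^ s with hH
  have hroot : H.IsRoot (C r * v) := by
    rw [Polynomial.IsRoot.def, hH, Polynomial.eval_finset_sum]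
    have key : ∀ s ∈ Finset.range (M + 1),
        (Polynomial.C (C (c s) * v ^ (M - s)) * Polynomial.X ^ s).eval (C r * v)
          = C (c s * r ^ s) * v ^ M := by
      intro s hs
      rw [Finset.mem_range] at hs
      rw [Polynomial.eval_mul, Polynomial.eval_pow, Polynomial.eval_C, Polynomial.eval_X]
      rw [mul_pow, ← map_pow]
      have hv : v ^ (M - s) * v ^ s = v ^ M := by rw [← pow_add]; congr 1; omega
      calc C (c s) * v ^ (M - s) * (C (r ^ s) * v ^ s)
          = C (c s) * C (r ^ s) * (v ^ (M - s) * v ^ s) := by ring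
        _ = C (c s * r ^ s) * v ^ M := by rw [hv, ← map_mul]
    rw [Finset.sum_congr rfl key, ← Finset.sum_mul, ← map_sum, hevalr]
    simp
  obtain ⟨Q, hQ⟩ := Polynomial.dvd_iff_isRoot.mpr hroot
  have hdvd : (u - C r * v) ∣ H.eval u := by
    refine ⟨Q.eval u, ?_⟩
    rw [hQ, Polynomial.eval_mul]
    simp
  have h2 : H.eval u = ∑ s ∈ Finset.range (M + 1), C (c s) * u ^ s * v ^ (M - s) := by
    rw [hH, Polynomial.eval_finset_sum]
    apply Finset.sum_congr rfl
    intro s _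
    rw [Polynomial.eval_mul, Polynomial.eval_pow, Polynomial.eval_C, Polynomial.eval_X]
    ring
  rwa [h2] at hdvd

end Helpers
theorem irreducible_semiinvariants_of_multiplicative_subgroup
    {K : Type*} [Field K] [IsAlgClosed K] [CharZero K]
    (a b : ℕ) (hcop : Nat.Coprime a b) (hab : 2 * a ≤ b) (hb : 1 ≤ b)
    (F : MvPolynomial (Fin 3) K) (hirr : Irreducible F) (d : ℕ)
    (hhom : F.IsHomogeneous d)
    (hinv : ∀ t : K, t ≠ 0 → ∃ l : K, l ≠ 0 ∧
      aeval ![(X 0 : MvPolynomial (Fin 3) K),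
              MvPolynomial.C (t ^ a) * X 1,
              MvPolynomial.C (t ^ b) * X 2] F = MvPolynomial.C l * F) :
    ∃ c : K, c ≠ 0 ∧
      (F = MvPolynomial.C c * X 0 ∨
       F = MvPolynomial.C c * X 1 ∨
       F = MvPolynomial.C c * X 2 ∨
       ∃ μ : K, μ ≠ 0 ∧
         F = MvPolynomial.C c * ((X 1) ^ b + MvPolynomial.C μ * (X 0) ^ (b - a) * (X 2) ^ a)) := by
  classical
  have hFne : F ≠ 0 := hirr.ne_zero
  -- total degree of each monomial in the support
  have hdeg3 : ∀ m : Fin 3 →₀ ℕ, m.degree = m 0 + m 1 + m 2 := by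
    intro m
    rw [show m.degree = ∑ i ∈ m.support, m i from rfl,
      Finset.sum_subset (Finset.subset_univ m.support)
        (fun i _ hi => Finsupp.notMem_support_iff.mp hi), Fin.sum_univ_three]
  have hdeg : ∀ m ∈ F.support, m 0 + m 1 + m 2 = d := by
    intro m hm
    have h1 : m.degree = d := by
      by_contra h
      exact (mem_support_iff.mp hm) (hhom.coeff_eq_zero h)
    rw [← h1, hdeg3]
  -- all monomials have the same weight
  obtain ⟨l, hl0, hF2⟩ := hinv 2 (by norm_num)
  have hwt : ∀ m ∈ F.support, ((2 : K)) ^ (a * m 1 + b * m 2) = l := by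
    intro m hm
    have hc := congrArg (coeff m) hF2
    rw [aeval_diag, coeff_C_mul] at hc
    exact mul_right_cancel₀ (mem_support_iff.mp hm) hc
  have hweq : ∀ m ∈ F.support, ∀ m' ∈ F.support,
      a * m 1 + b * m 2 = a * m' 1 + b * m' 2 := by
    intro m hm m' hm'
    have h := (hwt m hm).trans (hwt m' hm').symm
    have h2 : ((2 ^ (a * m 1 + b * m 2) : ℕ) : K) = ((2 ^ (a * m' 1 + b * m' 2) : ℕ) : K) := by
      push_cast; exact h
    exact Nat.pow_right_injective le_rfl (Nat.cast_injective h2)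
  -- divisibility by variables
  have hXdvd : ∀ i : Fin 3, (∀ m ∈ F.support, m i ≠ 0) → X i ∣ F := by
    intro i h
    have hFs : F = ∑ m ∈ F.support, monomial m (coeff m F) := F.as_sum
    rw [hFs]
    exact Finset.dvd_sum fun m hm => X_dvd_monomial.mpr (Or.inr (h m hm))
  -- from an irreducible factorization
  have hfac : ∀ p : MvPolynomial (Fin 3) K, p ∣ F → ¬ IsUnit p →
      ∃ c : K, c ≠ 0 ∧ F = C c * p := by
    rintro p ⟨G, rfl⟩ hp
    have hG := (hirr.isUnit_or_isUnit rfl).resolve_left hp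
    obtain ⟨c, hc, rfl⟩ := mv_isUnit_eq_C G hG
    exact ⟨c, hc, mul_comm _ _⟩
  have hXnu : ∀ i : Fin 3, ¬ IsUnit (X i : MvPolynomial (Fin 3) K) := by
    intro i
    exact mv_not_unit_of_eval_zero _ (fun _ => 0) (by simp)
  by_cases hx : X 0 ∣ F
  · obtain ⟨c, hc, hF⟩ := hfac _ hx (hXnu 0)
    exact ⟨c, hc, Or.inl hF⟩
  by_cases hy : X 1 ∣ F
  · obtain ⟨c, hc, hF⟩ := hfac _ hy (hXnu 1)
    exact ⟨c, hc, Or.inr (Or.inl hF)⟩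
  by_cases hz : X 2 ∣ F
  · obtain ⟨c, hc, hF⟩ := hfac _ hz (hXnu 2)
    exact ⟨c, hc, Or.inr (Or.inr (Or.inl hF))⟩
  -- main case: none of the variables divides F
  have hnd : ∀ i : Fin 3, ¬ X i ∣ F → ∃ m ∈ F.support, m i = 0 := by
    intro i h
    by_contra hcon
    push_neg at hcon
    exact h (hXdvd i hcon)
  obtain ⟨m₀, hm₀s, hm₀⟩ := hnd 0 hx
  obtain ⟨m₁, hm₁s, hm₁⟩ := hnd 1 hy
  obtain ⟨m₂, hm₂s, hm₂⟩ := hnd 2 hz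
  -- d ≥ 1
  have hd1 : 1 ≤ d := by
    by_contra h
    have hd0 : d = 0 := by omega
    have hFC : F = C (coeff 0 F) := by
      ext n
      rw [coeff_C]
      by_cases hn : (0 : Fin 3 →₀ ℕ) = n
      · rw [if_pos hn, ← hn]
      · rw [if_neg hn]
        by_contra hcn
        have hns : n ∈ F.support := mem_support_iff.mpr hcn
        have hsum := hdeg n hns
        apply hn
        have e0 : n 0 = 0 := by omega
        have e1 : n 1 = 0 := by omega
        have e2 : n 2 = 0 := by omega
        ext i
        fin_cases i
        · simpa using e0.symm
        · simpa using e1.symm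
        · simpa using e2.symm
    have hcne : coeff 0 F ≠ 0 := fun hc0 => hFne (by rw [hFC, hc0, map_zero])
    apply hirr.not_isUnit
    rw [hFC]
    exact (isUnit_iff_ne_zero.mpr hcne).map C
  -- the exponent pattern
  set E : ℕ → ℕ → (Fin 3 →₀ ℕ) := fun M s =>
    Finsupp.equivFunOnFinite.symm ![(b - a) * (M - s), b * s, a * (M - s)] with hE
  have hE0 : ∀ M s, E M s 0 = (b - a) * (M - s) := by intro M s; simp [hE]
  have hE1 : ∀ M s, E M s 1 = b * s := by intro M s; simp [hE]
  have hE2 : ∀ M s, E M s 2 = a * (M - s) := by intro M s; simp [hE]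
  have hEeq : ∀ (m : Fin 3 →₀ ℕ) (M s : ℕ),
      m 0 = (b - a) * (M - s) → m 1 = b * s → m 2 = a * (M - s) → m = E M s := by
    intro m M s h0 h1 h2
    ext i
    fin_cases i
    · rw [show ((⟨0, by omega⟩ : Fin 3)) = 0 from rfl, hE0]; exact h0
    · rw [show ((⟨1, by omega⟩ : Fin 3)) = 1 from rfl, hE1]; exact h1
    · rw [show ((⟨2, by omega⟩ : Fin 3)) = 2 from rfl, hE2]; exact h2
  -- unified support structure
  obtain ⟨M, hdM, hall, hsM, hs0⟩ :
      ∃ M : ℕ, d = b * M ∧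
        (∀ m ∈ F.support, ∃ s ≤ M, m = E M s) ∧
        E M M ∈ F.support ∧ E M 0 ∈ F.support := by
    by_cases ha : a = 0
    · -- then b = 1
      have hb1 : b = 1 := by
        have := hcop
        rwa [ha, Nat.coprime_zero_left] at this
      subst ha hb1
      -- weight = m 2, and it is 0
      have hw0 : ∀ m ∈ F.support, m 2 = 0 := by
        intro m hm
        have := hweq m hm m₂ hm₂s
        simpa [hm₂] using this
      refine ⟨d, by ring, ?_, ?_, ?_⟩
      · intro m hm
        refine ⟨m 1, ?_, hEeq m d (m 1) ?_ ?_ ?_⟩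
        · have := hdeg m hm; omega
        · have h1 := hdeg m hm
          have h2 := hw0 m hm
          omega
        · omega
        · have := hw0 m hm; omega
      · have : m₀ = E d d := by
          apply hEeq m₀ d d
          · omega
          · have h1 := hdeg m₀ hm₀s
            have h2 := hw0 m₀ hm₀s
            omega
          · have := hw0 m₀ hm₀s; omega
        rwa [← this]
      · have : m₁ = E d 0 := by
          apply hEeq m₁ d 0
          · have h1 := hdeg m₁ hm₁s
            have h2 := hw0 m₁ hm₁s
            omega
          · omega
          · have := hw0 m₁ hm₁s; omega
        rwa [← this]
    · -- a ≥ 1, hence a < b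
      have ha1 : 1 ≤ a := by omega
      have hba : a < b := by omega
      -- divisibility of the weight
      have habw : a * b ∣ a * m₂ 1 := by
        apply hcop.mul_dvd_of_dvd_of_dvd
        · exact dvd_mul_right a (m₂ 1)
        · have := hweq m₁ hm₁s m₂ hm₂s
          rw [hm₁, hm₂] at this
          simp only [mul_zero, zero_add, add_zero] at this
          exact ⟨m₁ 2, this.symm⟩
      obtain ⟨M, hM⟩ := habw
      -- decomposition of each support monomial
      have hdec : ∀ m ∈ F.support, ∃ s k : ℕ, s + k = M ∧ m 1 = b * s ∧ m 2 = a * k := by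
        intro m hm
        have hwm : a * m 1 + b * m 2 = a * b * M := by
          rw [← hM]
          have := hweq m hm m₂ hm₂s
          rw [hm₂] at this
          simpa using this
        have hadvd : a ∣ b * m 2 := by
          have haw : a ∣ a * b * M := ⟨b * M, by ring⟩
          exact (Nat.dvd_add_right (dvd_mul_right a (m 1))).mp (hwm ▸ haw)
        have hbdvd : b ∣ a * m 1 := by
          have hbw : b ∣ a * b * M := ⟨a * M, by ring⟩
          rw [add_comm] at hwm
          exact (Nat.dvd_add_right (dvd_mul_right b (m 2))).mp (hwm ▸ hbw)
        obtain ⟨k, hk⟩ := hcop.dvd_of_dvd_mul_left hadvd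
        obtain ⟨s, hs⟩ := hcop.symm.dvd_of_dvd_mul_left hbdvd
        refine ⟨s, k, ?_, hs, hk⟩
        rw [hs, hk] at hwm
        have : a * b * (s + k) = a * b * M := by rw [mul_add]; rw [← hwm]; ring
        exact Nat.eq_of_mul_eq_mul_left (by positivity) this
      -- m₂ gives d ≥ b * M, m₀ gives d ≤ b * M
      obtain ⟨s₂, k₂, hsk₂, hs₂, hk₂⟩ := hdec m₂ hm₂s
      have hk₂0 : k₂ = 0 := by
        rw [hm₂] at hk₂
        have := Nat.mul_eq_zero.mp hk₂.symm
        omega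
      have hs₂M : s₂ = M := by omega
      have hd₂ : m₂ 0 + b * M + 0 = d := by
        have := hdeg m₂ hm₂s
        rw [hs₂, hm₂, hs₂M] at this
        omega
      obtain ⟨s₀, k₀, hsk₀, hs₀, hk₀⟩ := hdec m₀ hm₀s
      have hd₀ : b * s₀ + a * k₀ = d := by
        have := hdeg m₀ hm₀s
        rw [hm₀, hs₀, hk₀] at this
        omega
      have hle : b * s₀ + a * k₀ ≤ b * M := by
        calc b * s₀ + a * k₀ ≤ b * s₀ + b * k₀ := by
              have : a * k₀ ≤ b * k₀ := Nat.mul_le_mul_right _ (le_of_lt hba)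
              omega
          _ = b * (s₀ + k₀) := by ring
          _ = b * M := by rw [hsk₀]
      have hdbM : d = b * M := by omega
      -- final form of each support monomial
      have hform : ∀ m ∈ F.support, ∃ s ≤ M, m = E M s := by
        intro m hm
        obtain ⟨s, k, hsk, hs, hk⟩ := hdec m hm
        refine ⟨s, by omega, hEeq m M s ?_ hs ?_⟩
        · have hMs : M - s = k := by omega
          rw [hMs, Nat.sub_mul]
          have e : m 0 + b * s + a * k = b * s + b * k := by
            have h1 := hdeg m hm
            rw [hs, hk] at h1
            rw [h1, hdbM, ← hsk, mul_add]
          have e2 : a * k ≤ b * k := Nat.mul_le_mul_right _ (le_of_lt hba)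
          generalize hp : b * s = p at e
          generalize hq : a * k = q at e e2 ⊢
          generalize ht : b * k = t at e e2 ⊢
          omega
        · have hMs : M - s = k := by omega
          rw [hMs, hk]
      refine ⟨M, hdbM, hform, ?_, ?_⟩
      · have : m₂ = E M M := by
          apply hEeq m₂ M M
          · simp only [Nat.sub_self, Nat.mul_zero]
            omega
          · rw [hs₂, hs₂M]
          · simp only [Nat.sub_self, Nat.mul_zero]
            exact hm₂
        rwa [← this]
      · have : m₁ = E M 0 := by
          obtain ⟨s₁, k₁, hsk₁, hs₁, hk₁⟩ := hdec m₁ hm₁s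
          have hs₁0 : s₁ = 0 := by
            rw [hm₁] at hs₁
            have := Nat.mul_eq_zero.mp hs₁.symm
            omega
          have hk₁M : k₁ = M := by omega
          apply hEeq m₁ M 0
          · have h1 := hdeg m₁ hm₁s
            rw [hm₁, hk₁, hk₁M] at h1
            have hMs : M - 0 = M := by omega
            rw [hMs, Nat.sub_mul]
            have e2 : a * M ≤ b * M := Nat.mul_le_mul_right _ (le_of_lt hba)
            generalize hq : a * M = q at h1 e2 ⊢
            generalize ht : b * M = t at hdbM e2 ⊢
            omega
          · rw [hm₁, Nat.mul_zero]
          · rw [hk₁, hk₁M, Nat.sub_zero]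
        rwa [← this]
      -- end a ≥ 1 case
  have hM1 : 1 ≤ M := by
    rcases Nat.eq_zero_or_pos M with h | h
    · subst h; omega
    · exact h
  -- representation of F
  have hrep : F = ∑ s ∈ Finset.range (M + 1), monomial (E M s) (coeff (E M s) F) := by
    ext n
    rw [coeff_sum]
    simp_rw [coeff_monomial]
    by_cases hn : n ∈ F.support
    · obtain ⟨s, hsMle, hnE⟩ := hall n hn
      rw [Finset.sum_eq_single s]
      · rw [if_pos hnE.symm, ← hnE]
      · intro t ht hts
        rw [if_neg]
        intro hEt
        apply hts
        have h1 : E M t 1 = E M s 1 := by rw [hEt, hnE]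
        rw [hE1, hE1] at h1
        exact Nat.eq_of_mul_eq_mul_left (by omega) h1
      · intro hsnot
        exact absurd (Finset.mem_range.mpr (by omega)) hsnot
    · rw [notMem_support_iff.mp hn]
      refine (Finset.sum_eq_zero ?_).symm
      intro s hs
      split_ifs with h
      · rw [h]; exact notMem_support_iff.mp hn
      · rfl
  -- rewrite monomials in binomial form
  have hmono : ∀ (s : ℕ) (c : K), monomial (E M s) c
      = C c * (X 1 ^ b) ^ s * (X 0 ^ (b - a) * X 2 ^ a) ^ (M - s) := by
    intro s c
    rw [monomial_fin3, hE0, hE1, hE2]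
    rw [mul_pow, ← pow_mul, ← pow_mul, ← pow_mul]
    ring
  have hrep2 : F = ∑ s ∈ Finset.range (M + 1),
      C (coeff (E M s) F) * (X 1 ^ b) ^ s * (X 0 ^ (b - a) * X 2 ^ a) ^ (M - s) := by
    rw [hrep]
    apply Finset.sum_congr rfl
    intro s _
    rw [hmono]
    rw [← hrep]
  -- apply the factorization lemma
  obtain ⟨r, hr0, hrdvd⟩ := factor_step (X 1 ^ b) (X 0 ^ (b - a) * X 2 ^ a) M hM1
    (fun s => coeff (E M s) F) (mem_support_iff.mp hsM) (mem_support_iff.mp hs0)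
  rw [← hrep2] at hrdvd
  have hpnu : ¬ IsUnit ((X 1 : MvPolynomial (Fin 3) K) ^ b - C r * (X 0 ^ (b - a) * X 2 ^ a)) := by
    obtain ⟨sb, hsb⟩ := IsAlgClosed.exists_pow_nat_eq r (show 0 < b by omega)
    apply mv_not_unit_of_eval_zero _ ![1, sb, 1]
    simp [hsb]
  obtain ⟨c, hc, hF⟩ := hfac _ hrdvd hpnu
  refine ⟨c, hc, Or.inr (Or.inr (Or.inr ⟨-r, neg_ne_zero.mpr hr0, ?_⟩))⟩
  rw [hF, map_neg]
  ring
end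

section
/- Let K be a field, let d and k be integers with 1 ≤ k ≤ d−1, and let F = x^k·y^{d−k} ∈ K[x,y,z]. For an invertible 3×3 matrix M over K, there exists λ ∈ K, λ ≠ 0, with F∘M = λ·F if and only if either (the first row of M is a nonzero scalar multiple of (1,0,0) and the second row is a nonzero scalar multiple of (0,1,0)), or (2k = d, the first row of M is a nonzero scalar multiple of (0,1,0), and the second row is a nonzero scalar multiple of (1,0,0)); the third row is arbitrary (subject to M being invertible). -/
open MvPolynomial

theorem two_lines_stabilizer
    {K : Type*} [Field K] (d k : ℕ) (hk1 : 1 ≤ k) (hkd : k ≤ d - 1)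
    (F : MvPolynomial (Fin 3) K) (hF : F = (X 0) ^ k * (X 1) ^ (d - k))
    (M : Matrix (Fin 3) (Fin 3) K) (hM : IsUnit M) :
    (∃ l : K, l ≠ 0 ∧ applyMatrix M F = MvPolynomial.C l * F) ↔
      (((∃ s : K, s ≠ 0 ∧ M 0 = s • ![1, 0, 0]) ∧
        (∃ s : K, s ≠ 0 ∧ M 1 = s • ![0, 1, 0])) ∨
       (2 * k = d ∧
        (∃ s : K, s ≠ 0 ∧ M 0 = s • ![0, 1, 0]) ∧
        (∃ s : K, s ≠ 0 ∧ M 1 = s • ![1, 0, 0]))) := by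
  have hd : 1 ≤ d := by omega
  set m := d - k with hmdef
  have hm1 : 1 ≤ m := by omega
  have hdm : k + m = d := by omega
  have hFne : ((X 0 : MvPolynomial (Fin 3) K) ^ k * X 1 ^ m) ≠ 0 :=
    mul_ne_zero (pow_ne_zero _ (X_ne_zero 0)) (pow_ne_zero _ (X_ne_zero 1))
  constructor
  · rintro ⟨l, hl, heq⟩
    rw [hF] at heq
    have heq' : (C (M 0 0) * X 0 + C (M 0 1) * X 1 + C (M 0 2) * X 2) ^ k *
        (C (M 1 0) * X 0 + C (M 1 1) * X 1 + C (M 1 2) * X 2) ^ m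
        = C l * ((X 0 : MvPolynomial (Fin 3) K) ^ k * X 1 ^ m) := by
      simpa [applyMatrix, Fin.sum_univ_three] using heq
    -- specialize y ↦ 0
    have hy : (M 0 0 = 0 ∧ M 0 2 = 0) ∨ (M 1 0 = 0 ∧ M 1 2 = 0) := by
      have h2 := congrArg
        (aeval (fun i : Fin 3 => if i = 1 then (0 : MvPolynomial (Fin 3) K) else X i)) heq'
      simp only [map_mul, map_pow, map_add, aeval_X, aeval_C, algebraMap_eq, Fin.reduceEq,
        if_true, if_false, reduceIte, add_zero] at h2
      norm_num [zero_pow (by omega : m ≠ 0)] at h2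
      rcases h2 with ⟨h4, -⟩ | ⟨h4, -⟩
      · left
        constructor
        · have := congrArg (eval ![(1:K),0,0]) h4; simpa using this
        · have := congrArg (eval ![(0:K),0,1]) h4; simpa using this
      · right
        constructor
        · have := congrArg (eval ![(1:K),0,0]) h4; simpa using this
        · have := congrArg (eval ![(0:K),0,1]) h4; simpa using this
    -- specialize x ↦ 0
    have hx : (M 0 1 = 0 ∧ M 0 2 = 0) ∨ (M 1 1 = 0 ∧ M 1 2 = 0) := by
      have h2 := congrArg
        (aeval (fun i : Fin 3 => if i = 0 then (0 : MvPolynomial (Fin 3) K) else X i)) heq'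
      simp only [map_mul, map_pow, map_add, aeval_X, aeval_C, algebraMap_eq, Fin.reduceEq,
        if_true, if_false, reduceIte, add_zero, zero_add] at h2
      norm_num [zero_pow (by omega : k ≠ 0)] at h2
      rcases h2 with ⟨h4, -⟩ | ⟨h4, -⟩
      · left
        constructor
        · have := congrArg (eval ![(0:K),1,0]) h4; simpa using this
        · have := congrArg (eval ![(0:K),0,1]) h4; simpa using this
      · right
        constructor
        · have := congrArg (eval ![(0:K),1,0]) h4; simpa using this
        · have := congrArg (eval ![(0:K),0,1]) h4; simpa using this
    rcases hy with ⟨ha0, ha2⟩ | ⟨hp0, hp2⟩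
    · rcases hx with ⟨hb1, hb2⟩ | ⟨hq1, hq2⟩
      · -- first row entirely zero: contradiction
        exfalso
        rw [ha0, hb1, hb2] at heq'
        simp only [map_zero, zero_mul, add_zero, zero_add,
          zero_pow (by omega : k ≠ 0)] at heq'
        rcases mul_eq_zero.mp heq'.symm with h | h
        · exact hl (by simpa using h)
        · exact hFne h
      · -- case B: M 0 = b • e₁, M 1 = p • e₀, need 2k = d
        rw [ha0, ha2, hq1, hq2] at heq'
        simp only [map_zero, zero_mul, add_zero, zero_add] at heq'
        have hL : (C (M 0 1) * X 1) ^ k * (C (M 1 0) * X 0) ^ m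
            = (monomial (Finsupp.single 0 m + Finsupp.single 1 k)
              ((M 0 1) ^ k * (M 1 0) ^ m) : MvPolynomial (Fin 3) K) := by
          rw [mul_pow, mul_pow, ← C_pow, ← C_pow, X_pow_eq_monomial,
            X_pow_eq_monomial, C_mul_monomial, C_mul_monomial, monomial_mul,
            mul_one, mul_one, add_comm (Finsupp.single (1:Fin 3) k)]
        have hR : C l * ((X 0 : MvPolynomial (Fin 3) K) ^ k * X 1 ^ m)
            = monomial (Finsupp.single 0 k + Finsupp.single 1 m) l := by
          simp [X_pow_eq_monomial, monomial_mul, C_mul_monomial]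
        have hmon := hL.symm.trans (heq'.trans hR)
        rw [monomial_eq_monomial_iff] at hmon
        rcases hmon with ⟨hsupp, hval⟩ | ⟨-, hval⟩
        · have hmk : m = k := by
            have h0 := DFunLike.congr_fun hsupp (0 : Fin 3)
            simpa [Finsupp.single_apply] using h0
          have hb : M 0 1 ≠ 0 := by
            intro h; rw [h] at hval; simp [zero_pow (by omega : k ≠ 0)] at hval
            exact hl hval.symm
          have hp : M 1 0 ≠ 0 := by
            intro h; rw [h] at hval; simp [zero_pow (by omega : m ≠ 0)] at hval
            exact hl hval.symm
          refine Or.inr ⟨by omega, ⟨M 0 1, hb, ?_⟩, ⟨M 1 0, hp, ?_⟩⟩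
          · funext j; fin_cases j <;> simp [ha0, ha2]
          · funext j; fin_cases j <;> simp [hq1, hq2]
        · exact absurd hval hl
    · rcases hx with ⟨hb1, hb2⟩ | ⟨hq1, hq2⟩
      · -- case A: M 0 = a • e₀, M 1 = q • e₁
        rw [hp0, hp2, hb1, hb2] at heq'
        simp only [map_zero, zero_mul, add_zero, zero_add] at heq'
        have heq'' : C ((M 0 0) ^ k * (M 1 1) ^ m) *
            ((X 0 : MvPolynomial (Fin 3) K) ^ k * X 1 ^ m)
            = C l * ((X 0 : MvPolynomial (Fin 3) K) ^ k * X 1 ^ m) := by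
          rw [← heq', mul_pow, mul_pow, C_mul, C_pow, C_pow]
          ring
        have hval : (M 0 0) ^ k * (M 1 1) ^ m = l :=
          C_injective _ _ (mul_right_cancel₀ hFne heq'')
        have ha : M 0 0 ≠ 0 := by
          intro h; rw [h] at hval; simp [zero_pow (by omega : k ≠ 0)] at hval
          exact hl hval.symm
        have hq : M 1 1 ≠ 0 := by
          intro h; rw [h] at hval; simp [zero_pow (by omega : m ≠ 0)] at hval
          exact hl hval.symm
        refine Or.inl ⟨⟨M 0 0, ha, ?_⟩, ⟨M 1 1, hq, ?_⟩⟩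
        · funext j; fin_cases j <;> simp [hb1, hb2]
        · funext j; fin_cases j <;> simp [hp0, hp2]
      · -- second row entirely zero: contradiction
        exfalso
        rw [hp0, hq1, hq2] at heq'
        simp only [map_zero, zero_mul, add_zero, zero_add,
          zero_pow (by omega : m ≠ 0), mul_zero] at heq'
        rcases mul_eq_zero.mp heq'.symm with h | h
        · exact hl (by simpa using h)
        · exact hFne h
  · rintro (⟨⟨s, hs, h0⟩, ⟨t, ht, h1⟩⟩ | ⟨h2k, ⟨s, hs, h0⟩, ⟨t, ht, h1⟩⟩)
    · refine ⟨s ^ k * t ^ m, mul_ne_zero (pow_ne_zero _ hs) (pow_ne_zero _ ht), ?_⟩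
      have e0 : ∀ j, M 0 j = s * ![1,0,0] j := fun j => by rw [h0]; simp
      have e1 : ∀ j, M 1 j = t * ![0,1,0] j := fun j => by rw [h1]; simp
      rw [hF]
      simp only [applyMatrix, map_mul, map_pow, aeval_X, Fin.sum_univ_three,
        e0 0, e0 1, e0 2, e1 0, e1 1, e1 2]
      simp [map_mul, map_pow, mul_pow]
      ring
    · have hmk : m = k := by omega
      refine ⟨s ^ k * t ^ m, mul_ne_zero (pow_ne_zero _ hs) (pow_ne_zero _ ht), ?_⟩
      have e0 : ∀ j, M 0 j = s * ![0,1,0] j := fun j => by rw [h0]; simp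
      have e1 : ∀ j, M 1 j = t * ![1,0,0] j := fun j => by rw [h1]; simp
      rw [hF]
      simp only [applyMatrix, map_mul, map_pow, aeval_X, Fin.sum_univ_three,
        e0 0, e0 1, e0 2, e1 0, e1 1, e1 2]
      rw [hmk]
      simp [map_mul, map_pow, mul_pow]
      ring
end

section
/- Let K be an algebraically closed field and let F ∈ K[x,y,z] be homogeneous of degree d ≥ 1. Suppose there is no nonzero linear form L ∈ K[x,y,z] such that every point of ℙ²(K) at which F vanishes is also a zero of L (i.e., the curve F = 0 is not supported on a single line). Then there exist four points P₁, P₂, P₃, P₄ ∈ ℙ²(K) with F(Pᵢ) = 0 for all i, such that no three of the Pᵢ are collinear (i.e., any three of them have linearly independent homogeneous coordinate vectors in K³). -/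
/-!
The zeros of `F` are not contained in a plane through the origin, so there are three independent
zeros `P₁, P₂, P₃`. Over an algebraically closed field a bivariate polynomial with one zero has
infinitely many, so the affine plane `P₃ + s P₁ + t P₂` contains infinitely many zeros of `F`.
One with `s ≠ 0` and `t ≠ 0` completes `P₁, P₂, P₃` to a frame. Otherwise one of the two axes, an
affine line `D + s E`, carries infinitely many zeros; then two zeros `Q, R` outside `span {D, E}`,
together with two zeros `D + s E` outside `span {Q, R}`, form a frame.
-/

open MvPolynomial
open scoped Polynomial.Bivariate

section Triple

variable {K : Type*} [Field K]

open Matrix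

theorem linearIndependent_triple_iff_det_ne_zero (a b c : Fin 3 → K) :
    LinearIndependent K ![a, b, c] ↔ (of ![a, b, c]).det ≠ 0 := by
  rw [← isUnit_iff_ne_zero, ← isUnit_iff_isUnit_det, ← linearIndependent_rows_iff_isUnit]
  rfl

theorem det_triple_rotate (a b c : Fin 3 → K) : (of ![b, c, a]).det = (of ![a, b, c]).det := by
  simp [det_fin_three]; ring

theorem det_triple_swap (a b c : Fin 3 → K) : (of ![b, a, c]).det = -(of ![a, b, c]).det := by
  simp [det_fin_three]; ring

def IsProjectiveFrame (P : Fin 4 → Fin 3 → K) : Prop :=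
  ∀ i j k : Fin 4, i ≠ j → i ≠ k → j ≠ k → LinearIndependent K ![P i, P j, P k]

theorem IsProjectiveFrame.ne_zero {P : Fin 4 → Fin 3 → K} (hP : IsProjectiveFrame P) (i : Fin 4) :
    P i ≠ 0 :=
  (hP i (i + 1) (i + 2) (by revert i; decide) (by revert i; decide) (by revert i; decide)).ne_zero 0

theorem det_triple_perm_ne_zero {a b c : Fin 3 → K} (h : (of ![a, b, c]).det ≠ 0) :
    (of ![b, c, a]).det ≠ 0 ∧ (of ![c, a, b]).det ≠ 0 ∧
      (of ![b, a, c]).det ≠ 0 ∧ (of ![a, c, b]).det ≠ 0 ∧ (of ![c, b, a]).det ≠ 0 := by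
  refine ⟨?_, ?_, ?_, ?_, ?_⟩
  · rwa [det_triple_rotate]
  · rwa [det_triple_rotate, det_triple_rotate]
  · rwa [det_triple_swap, neg_ne_zero]
  · rwa [det_triple_rotate, det_triple_swap, neg_ne_zero]
  · rwa [det_triple_swap, det_triple_rotate, neg_ne_zero]

theorem isProjectiveFrame_of_det_ne_zero {a b c d : Fin 3 → K} (habc : (of ![a, b, c]).det ≠ 0)
    (habd : (of ![a, b, d]).det ≠ 0) (hacd : (of ![a, c, d]).det ≠ 0)
    (hbcd : (of ![b, c, d]).det ≠ 0) :
    IsProjectiveFrame ![a, b, c, d] := by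
  have := det_triple_perm_ne_zero habc
  have := det_triple_perm_ne_zero habd
  have := det_triple_perm_ne_zero hacd
  have := det_triple_perm_ne_zero hbcd
  intro i j k hij hik hjk
  rw [linearIndependent_triple_iff_det_ne_zero]
  fin_cases i <;> fin_cases j <;> fin_cases k <;> simp_all

end Triple

section Zeros

variable {K : Type*} [Field K] [IsAlgClosed K]

open Polynomial in
theorem Polynomial.infinite_setOf_evalEval_eq_zero {g : K[X][Y]} {x₀ y₀ : K}
    (h : g.evalEval x₀ y₀ = 0) : {p : K × K | g.evalEval p.1 p.2 = 0}.Infinite := by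
  rcases eq_or_ne g.natDegree 0 with hdeg | hdeg
  · rw [g.eq_C_of_natDegree_eq_zero hdeg, evalEval_C] at h
    refine Set.infinite_of_injective_forall_mem (Prod.mk_right_injective x₀) fun y => ?_
    rw [Set.mem_ofPred_eq, g.eq_C_of_natDegree_eq_zero hdeg, evalEval_C]
    exact h
  · have hlc : g.leadingCoeff ≠ 0 := leadingCoeff_ne_zero.mpr (by rintro rfl; simp at hdeg)
    refine Set.Infinite.of_image Prod.fst ((finite_setOfPred_isRoot hlc).infinite_compl.mono ?_)
    intro x hx
    have hdeg' : (g.map (evalRingHom x)).degree ≠ 0 := by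
      refine (natDegree_pos_iff_degree_pos.mp ?_).ne'
      rw [natDegree_map_of_leadingCoeff_ne_zero (evalRingHom x) hx]
      exact Nat.pos_of_ne_zero hdeg
    obtain ⟨y, hy⟩ := IsAlgClosed.exists_root _ hdeg'
    exact ⟨(x, y), by rwa [Set.mem_ofPred_eq, ← map_evalRingHom_eval], rfl⟩

open Polynomial in
theorem MvPolynomial.infinite_setOf_eval_add_smul_add_smul_eq_zero {σ : Type*}
    {F : MvPolynomial σ K} {v : σ → K} (hv : eval v F = 0) (a b : σ → K) :
    {p : K × K | eval (v + p.1 • a + p.2 • b) F = 0}.Infinite := by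
  let g : K[X][Y] := eval₂ (Polynomial.C.comp Polynomial.C)
    (fun i => CC (v i) + Polynomial.C Polynomial.X * CC (a i) + Polynomial.X * CC (b i)) F
  have hg (s t : K) : g.evalEval s t = eval (v + s • a + t • b) F := by
    rw [← coe_evalEvalRingHom, hom_eval₂]
    congr 1
    · ext; simp
    · ext i; simp; ring
  simp_rw [← hg]
  exact infinite_setOf_evalEval_eq_zero (x₀ := 0) (y₀ := 0) (by simpa [hg] using hv)

end Zeros

section Frame

variable {K : Type*} [Field K]

open Matrix

theorem exists_eval_eq_zero_dotProduct_ne_zero {σ : Type*} [Fintype σ] {F : MvPolynomial σ K}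
    (hL : ¬ ∃ L : MvPolynomial σ K, L ≠ 0 ∧ L.IsHomogeneous 1 ∧
      ∀ v : σ → K, v ≠ 0 → eval v F = 0 → eval v L = 0)
    {n : σ → K} (hn : n ≠ 0) : ∃ v, eval v F = 0 ∧ n ⬝ᵥ v ≠ 0 := by
  classical
  by_contra! h
  obtain ⟨i, hi⟩ := Function.ne_iff.mp hn
  refine hL ⟨∑ j, C (n j) * X j, fun h0 => hi ?_,
    .sum _ _ _ fun j _ => (isHomogeneous_X K j).C_mul _,
    fun v _ hv => by simpa [dotProduct] using h v hv⟩
  simpa [Pi.single_apply] using congrArg (eval (Pi.single i 1)) h0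

variable {F : MvPolynomial (Fin 3) K}

theorem exists_eval_eq_zero_det_ne_zero
    (hF : ∀ n : Fin 3 → K, n ≠ 0 → ∃ v, eval v F = 0 ∧ n ⬝ᵥ v ≠ 0)
    {u a b : Fin 3 → K} (h : (of ![u, a, b]).det ≠ 0) :
    ∃ v, eval v F = 0 ∧ (of ![v, a, b]).det ≠ 0 := by
  have hdet (x : Fin 3 → K) : x ⬝ᵥ a ⨯₃ b = (of ![x, a, b]).det := triple_product_eq_det x a b
  obtain ⟨v, hv, hn⟩ := hF (a ⨯₃ b) fun h0 => h (by rw [← hdet, h0, dotProduct_zero])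
  exact ⟨v, hv, by rwa [← hdet, dotProduct_comm]⟩

theorem exists_three_zeros_det_ne_zero
    (hF : ∀ n : Fin 3 → K, n ≠ 0 → ∃ v, eval v F = 0 ∧ n ⬝ᵥ v ≠ 0) :
    ∃ P₁ P₂ P₃ : Fin 3 → K, eval P₁ F = 0 ∧ eval P₂ F = 0 ∧ eval P₃ F = 0 ∧
      (of ![P₁, P₂, P₃]).det ≠ 0 := by
  have h₀ : (of ![![1, 0, 0], ![0, 1, 0], ![0, 0, 1]] : Matrix _ _ K).det ≠ 0 := by
    simp [det_fin_three]
  obtain ⟨P₁, hP₁, h₁⟩ := exists_eval_eq_zero_det_ne_zero hF h₀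
  rw [← det_triple_rotate] at h₁
  obtain ⟨P₂, hP₂, h₂⟩ := exists_eval_eq_zero_det_ne_zero hF h₁
  rw [← det_triple_rotate] at h₂
  obtain ⟨P₃, hP₃, h₃⟩ := exists_eval_eq_zero_det_ne_zero hF h₂
  exact ⟨P₁, P₂, P₃, hP₁, hP₂, hP₃, by rwa [det_triple_rotate]⟩

variable [IsAlgClosed K]

theorem exists_frame_of_infinite_zeros_on_line
    (hF : ∀ n : Fin 3 → K, n ≠ 0 → ∃ v, eval v F = 0 ∧ n ⬝ᵥ v ≠ 0)
    {u D E : Fin 3 → K} (h : (of ![u, D, E]).det ≠ 0)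
    (hline : {s : K | eval (D + s • E) F = 0}.Infinite) :
    ∃ P : Fin 4 → Fin 3 → K, (∀ i, eval (P i) F = 0) ∧ IsProjectiveFrame P := by
  obtain ⟨Q, hQ, hQDE⟩ := exists_eval_eq_zero_det_ne_zero hF h
  obtain ⟨⟨a, b⟩, hR₀, hab⟩ :=
    (infinite_setOf_eval_add_smul_add_smul_eq_zero hQ D E).nontrivial.exists_ne (0, 0)
  -- `D + s • E` lies in the plane spanned by `Q` and `R = Q + a • D + b • E` iff `a * s = b`
  have hbad : {s : K | a * s = b}.Subsingleton := by
    intro s hs t ht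
    have ha : a ≠ 0 := by
      rintro rfl
      exact hab (by simp_all)
    exact mul_left_cancel₀ ha (hs.trans ht.symm)
  obtain ⟨s, ⟨hs, hsa⟩, t, ⟨ht, hta⟩, hst⟩ := (hline.sdiff hbad.finite).nontrivial
  have hpair (W : Fin 3 → K) :
      (of ![D + s • E, D + t • E, W]).det = (t - s) * (of ![W, D, E]).det := by
    simp [det_fin_three]; ring
  have hR : (of ![Q + a • D + b • E, D, E]).det = (of ![Q, D, E]).det := by
    simp [det_fin_three]; ring
  have hcross (x : K) :
      (of ![D + x • E, Q, Q + a • D + b • E]).det = (a * x - b) * (of ![Q, D, E]).det := by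
    simp [det_fin_three]; ring
  refine ⟨![D + s • E, D + t • E, Q, Q + a • D + b • E], ?_,
    isProjectiveFrame_of_det_ne_zero ?_ ?_ ?_ ?_⟩
  · intro i
    fin_cases i
    exacts [hs, ht, hQ, hR₀]
  · rw [hpair]
    exact mul_ne_zero (sub_ne_zero.mpr hst.symm) hQDE
  · rw [hpair, hR]
    exact mul_ne_zero (sub_ne_zero.mpr hst.symm) hQDE
  · rw [hcross]
    exact mul_ne_zero (sub_ne_zero.mpr hsa) hQDE
  · rw [hcross]
    exact mul_ne_zero (sub_ne_zero.mpr hta) hQDE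

theorem exists_frame_of_det_ne_zero
    (hF : ∀ n : Fin 3 → K, n ≠ 0 → ∃ v, eval v F = 0 ∧ n ⬝ᵥ v ≠ 0)
    {P₁ P₂ P₃ : Fin 3 → K} (h₁ : eval P₁ F = 0) (h₂ : eval P₂ F = 0) (h₃ : eval P₃ F = 0)
    (h : (of ![P₁, P₂, P₃]).det ≠ 0) :
    ∃ P : Fin 4 → Fin 3 → K, (∀ i, eval (P i) F = 0) ∧ IsProjectiveFrame P := by
  set S := {p : K × K | eval (P₃ + p.1 • P₁ + p.2 • P₂) F = 0}
  by_cases hgen : ∃ p ∈ S, p.1 ≠ 0 ∧ p.2 ≠ 0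
  · obtain ⟨⟨s, t⟩, hP₄, hs, ht⟩ := hgen
    refine ⟨![P₁, P₂, P₃, P₃ + s • P₁ + t • P₂], ?_, isProjectiveFrame_of_det_ne_zero h ?_ ?_ ?_⟩
    · intro i
      fin_cases i
      exacts [h₁, h₂, h₃, hP₄]
    · rwa [show (of ![P₁, P₂, P₃ + s • P₁ + t • P₂]).det = (of ![P₁, P₂, P₃]).det by
        simp [det_fin_three]; ring]
    · rw [show (of ![P₁, P₃, P₃ + s • P₁ + t • P₂]).det = -t * (of ![P₁, P₂, P₃]).det by
        simp [det_fin_three]; ring]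
      exact mul_ne_zero (neg_ne_zero.mpr ht) h
    · rw [show (of ![P₂, P₃, P₃ + s • P₁ + t • P₂]).det = s * (of ![P₁, P₂, P₃]).det by
        simp [det_fin_three]; ring]
      exact mul_ne_zero hs h
  · push Not at hgen
    have haxes : S ⊆ (fun s => (s, 0)) '' {s | eval (P₃ + s • P₁) F = 0} ∪
        (fun t => (0, t)) '' {t | eval (P₃ + t • P₂) F = 0} := by
      rintro ⟨s, t⟩ hst
      rcases eq_or_ne s 0 with rfl | hs
      · exact .inr ⟨t, by simpa [S] using hst, rfl⟩
      · obtain rfl := hgen _ hst hs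
        exact .inl ⟨s, by simpa [S] using hst, rfl⟩
    rcases Set.infinite_union.mp ((infinite_setOf_eval_add_smul_add_smul_eq_zero h₃ P₁ P₂).mono
      haxes) with hline | hline
    · exact exists_frame_of_infinite_zeros_on_line hF (u := P₂) (by rwa [det_triple_rotate])
        hline.of_image
    · exact exists_frame_of_infinite_zeros_on_line hF (u := P₁)
        (by rwa [det_triple_swap, neg_ne_zero, det_triple_rotate, det_triple_rotate]) hline.of_image

end Frame

theorem curve_not_a_line_contains_frame_general
    {K : Type*} [Field K] [IsAlgClosed K]
    (F : MvPolynomial (Fin 3) K)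
    (hnotline : ¬ ∃ L : MvPolynomial (Fin 3) K, L ≠ 0 ∧ L.IsHomogeneous 1 ∧
      ∀ v : Fin 3 → K, v ≠ 0 → eval v F = 0 → eval v L = 0) :
    ∃ P : Fin 4 → (Fin 3 → K),
      (∀ i, P i ≠ 0) ∧
      (∀ i, eval (P i) F = 0) ∧
      (∀ i j k : Fin 4, i ≠ j → i ≠ k → j ≠ k →
        LinearIndependent K ![P i, P j, P k]) := by
  have hF : ∀ n : Fin 3 → K, n ≠ 0 → ∃ v, eval v F = 0 ∧ n ⬝ᵥ v ≠ 0 :=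
    fun _ => exists_eval_eq_zero_dotProduct_ne_zero hnotline
  obtain ⟨P₁, P₂, P₃, h₁, h₂, h₃, h⟩ := exists_three_zeros_det_ne_zero hF
  obtain ⟨P, hPF, hP⟩ := exists_frame_of_det_ne_zero hF h₁ h₂ h₃ h
  exact ⟨P, hP.ne_zero, hPF, hP⟩

theorem curve_not_a_line_contains_frame
    {K : Type*} [Field K] [IsAlgClosed K]
    (d : ℕ) (hd : 1 ≤ d)
    (F : MvPolynomial (Fin 3) K) (hhom : F.IsHomogeneous d)
    (hnotline : ¬ ∃ L : MvPolynomial (Fin 3) K, L ≠ 0 ∧ L.IsHomogeneous 1 ∧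
      ∀ v : Fin 3 → K, v ≠ 0 → eval v F = 0 → eval v L = 0) :
    ∃ P : Fin 4 → (Fin 3 → K),
      (∀ i, P i ≠ 0) ∧
      (∀ i, eval (P i) F = 0) ∧
      (∀ i j k : Fin 4, i ≠ j → i ≠ k → j ≠ k →
        LinearIndependent K ![P i, P j, P k]) :=
  curve_not_a_line_contains_frame_general F hnotline
end
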